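/- arXiv:2208.00577 — 5 statements merged into one kernel-verified Lean document; each statement's English description precedes it below -/
import Mathlib

section
/- Let m ≥ 1 and ℓ ≥ 2. Suppose (x_1,…,x_ℓ) is an (ℓ−1,m)-Dyck path (i.e. x_1+⋯+x_{1+i} ≤ m(i+1) for 0 ≤ i ≤ ℓ−2 and x_1+⋯+x_ℓ = mℓ), and let x_0 be a nonnegative integer with x_0 ≤ m. Then x' = (x_0, x_1, …, x_{ℓ−1}, x'_ℓ), where x'_ℓ = m(ℓ+1) − (x_0 + x_1 + ⋯ + x_{ℓ−1}), is an (ℓ,m)-Dyck path, and degr(x') ≤ x_0·(ℓ−1) + degr(x). -/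
open Finset

/-- Partial sum of the first `i` entries of a sequence. -/
def pSum (x : ℕ → ℤ) (i : ℕ) : ℤ := ∑ k ∈ Finset.range i, x k

/-- An `(ℓ,m)`-Dyck path in step coordinates, encoded as a sequence `ℕ → ℤ` of
nonnegative integers vanishing beyond index `ℓ`. -/
def IsDyck (ℓ m : ℕ) (x : ℕ → ℤ) : Prop :=
  (∀ i, 0 ≤ x i) ∧
  (∀ i < ℓ, pSum x (i + 1) ≤ (m : ℤ) * (i + 1)) ∧
  pSum x (ℓ + 1) = (m : ℤ) * (ℓ + 1) ∧
  (∀ i, ℓ < i → x i = 0)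

/-- `δ⁺_{ij}(x) = min(x_i, max(0, (x_i−m)+⋯+(x_j−m)−1))`. -/
def deltaP (m : ℕ) (x : ℕ → ℤ) (i j : ℕ) : ℤ :=
  min (x i) (max 0 ((∑ k ∈ Finset.Icc i j, (x k - (m : ℤ))) - 1))

/-- `δ⁻_{ij}(x) = min(x_{i−1}, max(0, (m−x_i)+⋯+(m−x_j)))`. -/
def deltaM (m : ℕ) (x : ℕ → ℤ) (i j : ℕ) : ℤ :=
  min (x (i - 1)) (max 0 (∑ k ∈ Finset.Icc i j, ((m : ℤ) - x k)))

/-- `degr⁺(x) = Σ_{1 ≤ i ≤ j ≤ ℓ−1} δ⁺_{ij}(x)`. -/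
def degrP (ℓ m : ℕ) (x : ℕ → ℤ) : ℤ :=
  ∑ i ∈ Finset.Icc 1 (ℓ - 1), ∑ j ∈ Finset.Icc i (ℓ - 1), deltaP m x i j

/-- `degr⁻(x) = Σ_{1 ≤ i ≤ j ≤ ℓ−1} δ⁻_{ij}(x)`. -/
def degrM (ℓ m : ℕ) (x : ℕ → ℤ) : ℤ :=
  ∑ i ∈ Finset.Icc 1 (ℓ - 1), ∑ j ∈ Finset.Icc i (ℓ - 1), deltaM m x i j

/-- `degr(x) = degr⁺(x) + degr⁻(x)`. -/
def degr (ℓ m : ℕ) (x : ℕ → ℤ) : ℤ := degrP ℓ m x + degrM ℓ m x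

/-- Position coordinates `a_i = (m−x_0)+⋯+(m−x_{i−1})`, with the convention
`a_s = 0` for `s > ℓ`. -/
def dyckPos (ℓ m : ℕ) (x : ℕ → ℤ) (i : ℕ) : ℤ :=
  if i ≤ ℓ then (m : ℤ) * i - pSum x i else 0

/-- `area(x) = a_1 + ⋯ + a_ℓ = M − (ℓ·x_0 + ⋯ + 1·x_{ℓ−1})`. -/
def area (ℓ m : ℕ) (x : ℕ → ℤ) : ℤ := ∑ i ∈ Finset.Icc 1 ℓ, dyckPos ℓ m x i

/-- `point(x)`: the minimal `r ≤ ℓ` such that `a_r − a_ℓ > −m`. -/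
noncomputable def dyckPoint (ℓ m : ℕ) (x : ℕ → ℤ) : ℕ :=
  sInf {r : ℕ | -(m : ℤ) < dyckPos ℓ m x r - dyckPos ℓ m x ℓ}

/-- `pair(x)`: the minimal `r < ℓ` such that `a_r − a_{r+2} ≥ −m`. -/
noncomputable def dyckPair (ℓ m : ℕ) (x : ℕ → ℤ) : ℕ :=
  sInf {r : ℕ | r < ℓ ∧ -(m : ℤ) ≤ dyckPos ℓ m x r - dyckPos ℓ m x (r + 2)}

/-- `x` is rightable at `r`. -/
def RightableAt (ℓ m : ℕ) (x : ℕ → ℤ) (r : ℕ) : Prop :=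
  dyckPoint ℓ m x = r ∧ r < ℓ ∧
    ∀ i, i + 2 ≤ r → dyckPos ℓ m x i - dyckPos ℓ m x (i + 2) < -(m : ℤ)

/-- `x` is leftable at `r`. -/
def LeftableAt (ℓ m : ℕ) (x : ℕ → ℤ) (r : ℕ) : Prop :=
  dyckPair ℓ m x = r ∧ dyckPos ℓ m x (r + 1) - dyckPos ℓ m x ℓ ≤ (m : ℤ) + 1

/-- Reconstruct step coordinates from position coordinates:
`x_i = m + a_i − a_{i+1}` (with `a_{ℓ+1} = 0`), vanishing beyond `ℓ`. -/
def fromPos (ℓ m : ℕ) (a : ℕ → ℤ) : ℕ → ℤ :=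
  fun i => if i ≤ ℓ then (m : ℤ) + a i - a (i + 1) else 0

/-- Position coordinates of `cycleright(r,x)`:
`[a_0,…,a_r, a_ℓ+1, a_{r+1},…,a_{ℓ−1}]`. -/
def rightPosSeq (ℓ m : ℕ) (x : ℕ → ℤ) (r : ℕ) : ℕ → ℤ := fun i =>
  if i ≤ r then dyckPos ℓ m x i
  else if i = r + 1 then dyckPos ℓ m x ℓ + 1
  else if i ≤ ℓ then dyckPos ℓ m x (i - 1)
  else 0

/-- `right(x)` when `x` is rightable at `r`. -/
def rightMap (ℓ m : ℕ) (x : ℕ → ℤ) (r : ℕ) : ℕ → ℤ := fromPos ℓ m (rightPosSeq ℓ m x r)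

/-- Position coordinates of `cycleleft(r,x)`:
`[a_0,…,a_r, a_{r+2},…,a_ℓ, a_{r+1}−1]`. -/
def leftPosSeq (ℓ m : ℕ) (x : ℕ → ℤ) (r : ℕ) : ℕ → ℤ := fun i =>
  if i ≤ r then dyckPos ℓ m x i
  else if i < ℓ then dyckPos ℓ m x (i + 1)
  else if i = ℓ then dyckPos ℓ m x (r + 1) - 1
  else 0

/-- `left(x)` when `x` is leftable at `r`. -/
def leftMap (ℓ m : ℕ) (x : ℕ → ℤ) (r : ℕ) : ℕ → ℤ := fromPos ℓ m (leftPosSeq ℓ m x r)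

def Rightable (ℓ m : ℕ) (x : ℕ → ℤ) : Prop := ∃ r, RightableAt ℓ m x r

def Leftable (ℓ m : ℕ) (x : ℕ → ℤ) : Prop := ∃ r, LeftableAt ℓ m x r

/-- One application of `right` (meaningful when `x` is rightable). -/
noncomputable def rightStep (ℓ m : ℕ) (x : ℕ → ℤ) : ℕ → ℤ := rightMap ℓ m x (dyckPoint ℓ m x)

/-- One application of `left` (meaningful when `x` is leftable). -/
noncomputable def leftStep (ℓ m : ℕ) (x : ℕ → ℤ) : ℕ → ℤ := leftMap ℓ m x (dyckPair ℓ m x)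

/-- `y = lowest(x)`: `y = rightⁱ(x)` with all intermediate steps rightable and
`y` itself not rightable. -/
def IsLowestOf (ℓ m : ℕ) (x y : ℕ → ℤ) : Prop :=
  (∃ k, (∀ j < k, Rightable ℓ m ((rightStep ℓ m)^[j] x)) ∧ y = (rightStep ℓ m)^[k] x) ∧
    ¬ Rightable ℓ m y

/-- `x` is disconnected: some `leftⁱ(x)` is a Dyck path that is not leftable. -/
def Disconnected (ℓ m : ℕ) (x : ℕ → ℤ) : Prop :=
  ∃ i, IsDyck ℓ m ((leftStep ℓ m)^[i] x) ∧ ¬ Leftable ℓ m ((leftStep ℓ m)^[i] x)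

def ConnectedPath (ℓ m : ℕ) (x : ℕ → ℤ) : Prop := ¬ Disconnected ℓ m x

/-- `string(v₀) = {rightⁱ(v₀) : 0 ≤ i ≤ b}` where `right^b(v₀) = lowest(v₀)`. -/
def stringSet (ℓ m : ℕ) (v0 : ℕ → ℤ) : Set (ℕ → ℤ) :=
  {y | ∃ i, (∀ j < i, Rightable ℓ m ((rightStep ℓ m)^[j] v0)) ∧ y = (rightStep ℓ m)^[i] v0}

/-- A matrix in `𝐌_{m×ℓ}`, encoded as `M : ℕ → ℕ → Option Bool`
(`some false` = 0, `some true` = 1, `none` = ∗; entries outside the `m×ℓ`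
range are normalized to `none`). -/
def IsGoodMatrix (m ℓ : ℕ) (M : ℕ → ℕ → Option Bool) : Prop :=
  (∀ i j, m ≤ i ∨ ℓ ≤ j → M i j = none) ∧
  (∀ i j i' j', i < m → j < ℓ → i' < m → j' < ℓ → M i j = none →
    (i < i' ∨ (i = i' ∧ j < j')) → M i' j' = none) ∧
  M 0 0 = some false ∧
  (∀ i j, i < m → j < ℓ → M i j ≠ none →
    (M i j = some true ∨
      ∃ i' j', i' < m ∧ j' < ℓ ∧ (i < i' ∨ (i = i' ∧ j < j')) ∧ M i' j' ≠ none)) ∧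
  (∀ i j, M i j = some false → M (i + 1) j ≠ some true)

/-- `|M|`: the number of `(0,1)` pairs of entries of `M` in contact. -/
def contactCount (m ℓ : ℕ) (M : ℕ → ℕ → Option Bool) : ℕ :=
  (((Finset.range m ×ˢ Finset.range ℓ) ×ˢ (Finset.range m ×ˢ Finset.range ℓ)).filter
    fun p => M p.1.1 p.1.2 = some false ∧ M p.2.1 p.2.2 = some true ∧
      ((p.2.1 = p.1.1 ∧ p.1.2 < p.2.2) ∨ (p.2.1 = p.1.1 + 1 ∧ p.2.2 ≤ p.1.2))).card

/-- `h(M)`: the number of `0` entries of `M`. -/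
def zeroCount (m ℓ : ℕ) (M : ℕ → ℕ → Option Bool) : ℕ :=
  ((Finset.range m ×ˢ Finset.range ℓ).filter fun p => M p.1 p.2 = some false).card

/-- `w(M)`: the number of `1` entries of `M`. -/
def oneCount (m ℓ : ℕ) (M : ℕ → ℕ → Option Bool) : ℕ :=
  ((Finset.range m ×ˢ Finset.range ℓ).filter fun p => M p.1 p.2 = some true).card

/-- A partition with all parts ≤ `b`, as a weakly decreasing list of positive
integers. -/
def IsPartitionList (b : ℕ) (L : List ℕ) : Prop :=
  L.Pairwise (· ≥ ·) ∧ ∀ p ∈ L, 0 < p ∧ p ≤ b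

/-- The `(ℓ−1)`-width `w^{ℓ−1}(λ)`: the sum of the lengths of the
`(ℓ−1)`-hook rows of `λ` (row 1 is a hook row; if row `i` is a hook row, so is
row `i + ℓ − λ_i`). -/
def hookWidth (ℓ : ℕ) : List ℕ → ℕ
  | [] => 0
  | p :: rest => p + hookWidth ℓ (rest.drop (ℓ - p - 1))
  termination_by L => L.length
  decreasing_by
    simp only [List.length_drop, List.length_cons]
    omega

/-- The number of `1` entries in column `j` of `M`. -/
def colOnes (m : ℕ) (M : ℕ → ℕ → Option Bool) (j : ℕ) : ℕ :=
  ((Finset.range m).filter fun i => M i j = some true).card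

/-- The map `f`: the path with position coordinates `[0,a_1,…,a_ℓ]` where `a_j`
is the number of `1` entries in column `j` of `M`. -/
def pathOfMatrix (ℓ m : ℕ) (M : ℕ → ℕ → Option Bool) : ℕ → ℤ :=
  fromPos ℓ m fun i => if i = 0 then 0 else if i ≤ ℓ then (colOnes m M (i - 1) : ℤ) else 0

/-- The number of `1` entries in contact with the `0` entry at `(i,j)`. -/
def zContacts (m ℓ : ℕ) (M : ℕ → ℕ → Option Bool) (i j : ℕ) : ℕ :=
  ((Finset.range m ×ˢ Finset.range ℓ).filter
    fun q => M q.1 q.2 = some true ∧ ((q.1 = i ∧ j < q.2) ∨ (q.1 = i + 1 ∧ q.2 ≤ j))).card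

/-- The number of `0` entries strictly before `(i,j)` in row-reading order. -/
def zIndex (m ℓ : ℕ) (M : ℕ → ℕ → Option Bool) (i j : ℕ) : ℕ :=
  ((Finset.range m ×ˢ Finset.range ℓ).filter
    fun q => M q.1 q.2 = some false ∧ (q.1 < i ∨ (q.1 = i ∧ q.2 < j))).card

/-- `M` realizes the partition `L`: the `i`-th `0` entry of `M` in row-reading
order is in contact with exactly `L_i` entries equal to `1`. -/
def MatRealizes (m ℓ : ℕ) (M : ℕ → ℕ → Option Bool) (L : List ℕ) : Prop :=
  zeroCount m ℓ M = L.length ∧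
  ∀ i j, i < m → j < ℓ → M i j = some false →
    zContacts m ℓ M i j = L.getD (zIndex m ℓ M i j) 0

/-- `x = f(g(L))` for the bijections `f`, `g` (characterized relationally). -/
def IsFG (ℓ m : ℕ) (L : List ℕ) (x : ℕ → ℤ) : Prop :=
  ∃ M, IsGoodMatrix m ℓ M ∧ contactCount m ℓ M < (ℓ - 1) * m ∧ MatRealizes m ℓ M L ∧
    x = pathOfMatrix ℓ m M

/-- The partition with `p i` parts of size `ℓ−1−i`, for `0 ≤ i ≤ ℓ−2`. -/
def partitionOfCounts (ℓ : ℕ) (p : ℕ → ℕ) : List ℕ :=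
  (List.range (ℓ - 1)).flatMap fun i => List.replicate (p i) (ℓ - 1 - i)

/-- `M = m·ℓ(ℓ+1)/2`, the maximal possible area. -/
def MVal (ℓ m : ℕ) : ℕ := m * ℓ * (ℓ + 1) / 2

/-- The predicate `extendable(ℓ,m,d)`. -/
def Extendable (ℓ m : ℕ) (d : ℤ) : Prop :=
  ∃ ext : List ℕ → Set (ℕ → ℤ),
    (∀ L, IsPartitionList (ℓ - 1) L → (L.sum : ℤ) = d →
      (ext L ⊆ {w | IsDyck ℓ m w ∧ degr ℓ m w = d ∧ Disconnected ℓ m w}) ∧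
      (∀ w w', w ∈ ext L → w' ∈ ext L → area ℓ m w = area ℓ m w' → w = w') ∧
      (∀ v0, IsFG ℓ m L v0 → ∀ vs, IsLowestOf ℓ m v0 vs →
        area ℓ m vs ≤ (MVal ℓ m : ℤ) - L.sum - L.length ∧
        ∀ a : ℤ, (area ℓ m vs < a ∧ a ≤ (MVal ℓ m : ℤ) - L.sum - L.length) ↔
          ∃ w ∈ ext L, area ℓ m w = a)) ∧
    ({w | IsDyck ℓ m w ∧ degr ℓ m w = d ∧ Disconnected ℓ m w} =
      ⋃ L ∈ {L : List ℕ | IsPartitionList (ℓ - 1) L ∧ (L.sum : ℤ) = d}, ext L) ∧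
    (∀ L L', IsPartitionList (ℓ - 1) L → (L.sum : ℤ) = d →
      IsPartitionList (ℓ - 1) L' → (L'.sum : ℤ) = d → L ≠ L' → ext L ∩ ext L' = ∅)

/-!
Prepending the step `c` shifts every index of `y` by one. The terms `δ^±_{ij}` with `i ≥ 2`
are then exactly the terms `δ^±_{i-1,j-1}` of `y`, so only the row `i = 1` is new. There
`δ⁺_{1j}` vanishes, because `(x_1 - m) + ⋯ + (x_j - m)` is a partial sum of `y` minus its
Dyck bound and hence `≤ 0`, while each of the `ℓ - 1` terms `δ⁻_{1j}` is at most `x_0 = c`.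
-/

theorem Finset.sum_Icc_add_one {M : Type*} [AddCommMonoid M] (f : ℕ → M) (a b : ℕ) :
    ∑ k ∈ Icc (a + 1) (b + 1), f k = ∑ k ∈ Icc a b, f (k + 1) := by
  rw [← map_add_right_Icc, sum_map]
  rfl

theorem Finset.sum_Icc_one_triangle {M : Type*} [AddCommMonoid M] (f : ℕ → ℕ → M) (n : ℕ) :
    ∑ i ∈ Icc 1 (n + 1), ∑ j ∈ Icc i (n + 1), f i j =
      ∑ j ∈ Icc 1 (n + 1), f 1 j + ∑ i ∈ Icc 1 n, ∑ j ∈ Icc i n, f (i + 1) (j + 1) := by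
  conv_lhs => rw [← insert_Icc_add_one_left_eq_Icc (by omega), sum_insert (by simp),
    sum_Icc_add_one]
  simp only [sum_Icc_add_one]

theorem IsDyck.pSum_le {ℓ m : ℕ} {x : ℕ → ℤ} (hx : IsDyck ℓ m x) {i : ℕ} (hi : i ≤ ℓ + 1) :
    pSum x i ≤ m * i := by
  obtain _ | i := i
  · simp [pSum]
  · rcases Nat.lt_or_eq_of_le (Nat.succ_le_succ_iff.mp hi) with hi | rfl
    · exact_mod_cast hx.2.1 i hi
    · exact_mod_cast hx.2.2.1.le

section Shift

variable {m : ℕ} {x y : ℕ → ℤ} {i j : ℕ}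

theorem deltaP_add_one (hij : i ≤ j) (hxy : ∀ k ≤ j, x (k + 1) = y k) :
    deltaP m x (i + 1) (j + 1) = deltaP m y i j := by
  unfold deltaP
  rw [sum_Icc_add_one, hxy i hij,
    sum_congr rfl fun k hk => by rw [hxy k (mem_Icc.mp hk).2]]

theorem deltaM_add_one (hi : 1 ≤ i) (hij : i ≤ j) (hxy : ∀ k ≤ j, x (k + 1) = y k) :
    deltaM m x (i + 1) (j + 1) = deltaM m y i j := by
  obtain ⟨i, rfl⟩ := Nat.exists_eq_add_of_le' hi
  unfold deltaM
  rw [sum_Icc_add_one, Nat.add_sub_cancel, Nat.add_sub_cancel, hxy i (by omega),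
    sum_congr rfl fun k hk => by rw [hxy k (mem_Icc.mp hk).2]]

theorem deltaP_eq_zero (hx : 0 ≤ x i) (hs : ∑ k ∈ Icc i j, (x k - m) ≤ 1) :
    deltaP m x i j = 0 := by
  unfold deltaP
  rw [max_eq_left (by linarith), min_eq_right hx]

theorem degrP_of_shift {n : ℕ} (hy : IsDyck (n + 1) m y) (hxy : ∀ k ≤ n, x (k + 1) = y k) :
    degrP (n + 2) m x = degrP (n + 1) m y := by
  have hrow : ∀ j ∈ Icc 1 (n + 1), deltaP m x 1 j = 0 := by
    intro j hj
    obtain ⟨j, rfl⟩ := Nat.exists_eq_add_of_le' (mem_Icc.mp hj).1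
    have hj : j ≤ n := by have := (mem_Icc.mp hj).2; omega
    apply deltaP_eq_zero (by rw [hxy 0 (by omega)]; exact hy.1 0)
    have hsum : ∑ k ∈ Icc 1 (j + 1), (x k - m) = pSum y (j + 1) - m * (j + 1 : ℕ) := by
      rw [sum_Icc_add_one, sum_congr rfl fun k hk => by rw [hxy k ((mem_Icc.mp hk).2.trans hj)],
        ← Nat.range_succ_eq_Icc_zero, sum_sub_distrib, sum_const, card_range, nsmul_eq_mul,
        pSum, mul_comm]
    linarith [hy.pSum_le (i := j + 1) (by omega)]
  unfold degrP
  rw [show n + 2 - 1 = n + 1 by omega, Nat.add_sub_cancel, sum_Icc_one_triangle,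
    sum_eq_zero hrow, zero_add]
  refine sum_congr rfl fun i hi => sum_congr rfl fun j hj => ?_
  exact deltaP_add_one (mem_Icc.mp hj).1 fun k hk => hxy k (hk.trans (mem_Icc.mp hj).2)

theorem degrM_le_of_shift {n : ℕ} (hxy : ∀ k ≤ n, x (k + 1) = y k) :
    degrM (n + 2) m x ≤ x 0 * (n + 1) + degrM (n + 1) m y := by
  have hrow : ∑ j ∈ Icc 1 (n + 1), deltaM m x 1 j ≤ x 0 * (n + 1) :=
    calc ∑ j ∈ Icc 1 (n + 1), deltaM m x 1 j
        ≤ ∑ _j ∈ Icc 1 (n + 1), x 0 := sum_le_sum fun j _ => min_le_left _ _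
      _ = x 0 * (n + 1) := by simp [mul_comm]
  unfold degrM
  rw [show n + 2 - 1 = n + 1 by omega, Nat.add_sub_cancel, sum_Icc_one_triangle]
  refine add_le_add hrow (sum_congr rfl fun i hi => sum_congr rfl fun j hj => ?_).le
  exact deltaM_add_one (mem_Icc.mp hi).1 (mem_Icc.mp hj).1
    fun k hk => hxy k (hk.trans (mem_Icc.mp hj).2)

end Shift

def prependStep (ℓ m : ℕ) (c : ℤ) (y : ℕ → ℤ) : ℕ → ℤ := fun i =>
  if i = 0 then c else if i < ℓ then y (i - 1)
  else if i = ℓ then (m : ℤ) * ((ℓ : ℤ) + 1) - (c + ∑ k ∈ Finset.range (ℓ - 1), y k)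
  else 0

section PrependStep

variable {ℓ m : ℕ} {c : ℤ} {y : ℕ → ℤ}

theorem prependStep_add_one {k : ℕ} (hk : k + 1 < ℓ) : prependStep ℓ m c y (k + 1) = y k := by
  simp [prependStep, hk]

theorem pSum_prependStep_add_one {i : ℕ} (hi : i < ℓ) :
    pSum (prependStep ℓ m c y) (i + 1) = c + pSum y i := by
  rw [pSum, sum_range_succ', add_comm, pSum]
  congr 1
  exact sum_congr rfl fun k hk => prependStep_add_one (by have := mem_range.mp hk; omega)

theorem isDyck_prependStep (hℓ : 1 ≤ ℓ) (hy : IsDyck (ℓ - 1) m y) (hc0 : 0 ≤ c)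
    (hcm : c ≤ m) : IsDyck ℓ m (prependStep ℓ m c y) := by
  have hlast : prependStep ℓ m c y ℓ = m * ((ℓ : ℤ) + 1) - (c + pSum y (ℓ - 1)) := by
    simp [prependStep, pSum, show ℓ ≠ 0 by omega]
  have hbound : pSum y (ℓ - 1) ≤ m * (ℓ - 1 : ℕ) := hy.pSum_le (by omega)
  push_cast [hℓ] at hbound
  refine ⟨fun i => ?_, fun i hi => ?_, ?_, fun i hi => ?_⟩
  · rcases Nat.lt_trichotomy i ℓ with hi | rfl | hi
    · obtain _ | i := i
      · simpa [prependStep] using hc0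
      · rw [prependStep_add_one hi]; exact hy.1 i
    · rw [hlast]; linarith
    · simp [prependStep, hi.ne', show i ≠ 0 by omega, show ¬ i < ℓ by omega]
  · rw [pSum_prependStep_add_one hi]
    have := hy.pSum_le (i := i) (by omega)
    linarith
  · rw [pSum, sum_range_succ, ← pSum, show ℓ = ℓ - 1 + 1 by omega, pSum_prependStep_add_one
      (by omega), ← show ℓ = ℓ - 1 + 1 by omega, hlast]
    ring
  · simp [prependStep, hi.ne', show i ≠ 0 by omega, show ¬ i < ℓ by omega]

end PrependStep

theorem statement0_general (ℓ m : ℕ) (hl : 2 ≤ ℓ) (y : ℕ → ℤ)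
    (hy : IsDyck (ℓ - 1) m y) (c : ℤ) (hc0 : 0 ≤ c) (hcm : c ≤ (m : ℤ))
    (x' : ℕ → ℤ)
    (hx' : x' = fun i => if i = 0 then c else if i < ℓ then y (i - 1)
      else if i = ℓ then (m : ℤ) * ((ℓ : ℤ) + 1) - (c + ∑ k ∈ Finset.range (ℓ - 1), y k)
      else 0) :
    IsDyck ℓ m x' ∧ degr ℓ m x' ≤ c * ((ℓ : ℤ) - 1) + degr (ℓ - 1) m y := by
  replace hx' : x' = prependStep ℓ m c y := hx'
  subst hx'
  refine ⟨isDyck_prependStep (by omega) hy hc0 hcm, ?_⟩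
  obtain ⟨n, rfl⟩ : ∃ n, ℓ = n + 2 := ⟨ℓ - 2, by omega⟩
  rw [show n + 2 - 1 = n + 1 by omega] at hy ⊢
  have hshift : ∀ k ≤ n, prependStep (n + 2) m c y (k + 1) = y k :=
    fun k hk => prependStep_add_one (by omega)
  have hP := degrP_of_shift hy hshift
  have hM := degrM_le_of_shift (m := m) hshift
  rw [show prependStep (n + 2) m c y 0 = c from rfl] at hM
  unfold degr
  push_cast
  linarith

/-- Claim `fitsout`: prepending a step coordinate `x₀ ≤ m` to an
`(ℓ−1,m)`-Dyck path `(x_1,…,x_ℓ)` (and adjusting the last coordinate) yields an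
`(ℓ,m)`-Dyck path `x'` with `degr(x') ≤ x₀(ℓ−1) + degr(x)`. -/
theorem statement0 (ℓ m : ℕ) (hm : 1 ≤ m) (hl : 2 ≤ ℓ) (y : ℕ → ℤ)
    (hy : IsDyck (ℓ - 1) m y) (c : ℤ) (hc0 : 0 ≤ c) (hcm : c ≤ (m : ℤ))
    (x' : ℕ → ℤ)
    (hx' : x' = fun i => if i = 0 then c else if i < ℓ then y (i - 1)
      else if i = ℓ then (m : ℤ) * ((ℓ : ℤ) + 1) - (c + ∑ k ∈ Finset.range (ℓ - 1), y k)
      else 0) :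
    IsDyck ℓ m x' ∧ degr ℓ m x' ≤ c * ((ℓ : ℤ) - 1) + degr (ℓ - 1) m y :=
  statement0_general ℓ m hl y hy c hc0 hcm x' hx'
end

section
/- Let m ≥ 1, ℓ ≥ 2, let x = (x_0,…,x_ℓ) be an (ℓ,m)-Dyck path, and let 1 ≤ j ≤ ℓ−1. Then ε⁺_{1j}(x)+ε⁺_{2j}(x)+⋯+ε⁺_{jj}(x) = δ⁺_{1j}(x)+δ⁺_{2j}(x)+⋯+δ⁺_{jj}(x), and ε⁻_{1j}(x)+ε⁻_{2j}(x)+⋯+ε⁻_{jj}(x) − ε⁰_{0j}(x) = δ⁻_{1j}(x)+δ⁻_{2j}(x)+⋯+δ⁻_{jj}(x). -/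
open Finset

/-- `ε⁺_{ij}(x) = min(m, max(0, (x_i−m)+⋯+(x_j−m)−1))`. -/
def epsP (m : ℕ) (x : ℕ → ℤ) (i j : ℕ) : ℤ :=
  min (m : ℤ) (max 0 ((∑ k ∈ Finset.Icc i j, (x k - (m : ℤ))) - 1))

/-- `ε⁻_{ij}(x) = min(m, max(0, (m−x_i)+⋯+(m−x_j)))`. -/
def epsM (m : ℕ) (x : ℕ → ℤ) (i j : ℕ) : ℤ :=
  min (m : ℤ) (max 0 (∑ k ∈ Finset.Icc i j, ((m : ℤ) - x k)))

/-- `ε⁰_{ij}(x) = max(0, (m−x_i)+⋯+(m−x_j)−m)`. -/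
def eps0 (m : ℕ) (x : ℕ → ℤ) (i j : ℕ) : ℤ :=
  max 0 ((∑ k ∈ Finset.Icc i j, ((m : ℤ) - x k)) - (m : ℤ))

/-! Both identities telescope. For `0 ≤ a` and `0 ≤ b`,
`min b t⁺ - min a t⁺ = (t - a)⁺ - (t - b)⁺`. With `b = m` and `t` the tail sum inside `ε⁺_{ij}`
this gives `ε⁺_{ij} - δ⁺_{ij} = F(i+1) - F(i)` for `F(i) = (∑_{k=i}^{j} (x_k - m) - 1 - m)⁺`,
and likewise `ε⁻_{ij} - δ⁻_{ij} = ε⁰_{i-1,j} - ε⁰_{ij}`. Of the boundary terms only `ε⁰_{0j}`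
survives: `F(j+1)` and `ε⁰_{jj}` vanish trivially, and `F(1) = 0` is the Dyck condition
`x_0 + ⋯ + x_j ≤ m(j+1)`. -/

theorem min_max_zero_sub_min_max_zero {α : Type*} [AddCommGroup α] [LinearOrder α]
    [IsOrderedAddMonoid α] {a b : α} (ha : 0 ≤ a) (hb : 0 ≤ b) (t : α) :
    min b (max 0 t) - min a (max 0 t) = max 0 (t - a) - max 0 (t - b) := by
  rcases le_total 0 t with ht | ht
  · rw [max_eq_right ht]
    rcases le_total a t with hat | hat <;> rcases le_total b t with hbt | hbt <;>
      simp [*, sub_nonneg.2, sub_nonpos.2]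
  · have h1 : t - a ≤ 0 := by simpa using add_le_add ht (neg_nonpos.2 ha)
    have h2 : t - b ≤ 0 := by simpa using add_le_add ht (neg_nonpos.2 hb)
    simp [max_eq_left ht, max_eq_left h1, max_eq_left h2, ha, hb]

theorem IsDyck.sum_Icc_sub_le {ℓ m : ℕ} {x : ℕ → ℤ} (hx : IsDyck ℓ m x) {j : ℕ} (hj : j < ℓ) :
    ∑ k ∈ Icc 1 j, (x k - m) ≤ m := by
  obtain ⟨hx0, hbound, -, -⟩ := hx
  have hpSum : pSum x (j + 1) = x 0 + ∑ k ∈ Icc 1 j, x k := by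
    rw [pSum, range_eq_Ico, sum_eq_sum_Ico_succ_bot j.succ_pos, zero_add, Nat.succ_eq_add_one,
      Ico_add_one_right_eq_Icc]
  have hj_bound := hbound j hj
  rw [hpSum] at hj_bound
  rw [sum_sub_distrib, sum_const, Nat.card_Icc, nsmul_eq_mul]
  push_cast
  linarith [hx0 0]

theorem epsP_sub_deltaP {m : ℕ} {x : ℕ → ℤ} {i j : ℕ} (hxi : 0 ≤ x i) (hij : i ≤ j) :
    epsP m x i j - deltaP m x i j =
      max 0 ((∑ k ∈ Icc (i + 1) j, (x k - m)) - 1 - m) -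
        max 0 ((∑ k ∈ Icc i j, (x k - m)) - 1 - m) := by
  rw [epsP, deltaP, min_max_zero_sub_min_max_zero hxi (Nat.cast_nonneg m),
    ← add_sum_Ioc_eq_sum_Icc hij, ← Icc_add_one_left_eq_Ioc]
  ring_nf

theorem epsM_sub_deltaM {m : ℕ} {x : ℕ → ℤ} {i j : ℕ} (hxi : 0 ≤ x (i - 1)) (hi : 1 ≤ i)
    (hij : i ≤ j) :
    epsM m x i j - deltaM m x i j = eps0 m x (i - 1) j - eps0 m x i j := by
  rw [epsM, deltaM, min_max_zero_sub_min_max_zero hxi (Nat.cast_nonneg m), eps0, eps0,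
    ← add_sum_Ioc_eq_sum_Icc (by omega : i - 1 ≤ j), ← Icc_add_one_left_eq_Ioc,
    Nat.sub_add_cancel hi]
  ring_nf

theorem sum_epsP_eq_sum_deltaP {m : ℕ} {x : ℕ → ℤ} (hx : ∀ i, 0 ≤ x i) {j : ℕ} (hj : 1 ≤ j)
    (hS : ∑ k ∈ Icc 1 j, (x k - m) ≤ m) :
    ∑ i ∈ Icc 1 j, epsP m x i j = ∑ i ∈ Icc 1 j, deltaP m x i j := by
  set F : ℕ → ℤ := fun i => max 0 ((∑ k ∈ Icc i j, (x k - m)) - 1 - m)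
  rw [← sub_eq_zero, ← sum_sub_distrib]
  calc ∑ i ∈ Icc 1 j, (epsP m x i j - deltaP m x i j)
      = ∑ i ∈ Icc 1 j, (F (i + 1) - F i) :=
        sum_congr rfl fun i hi => epsP_sub_deltaP (hx i) (mem_Icc.1 hi).2
    _ = F (j + 1) - F 1 := sum_Icc_sub hj F
    _ = 0 := by simp only [F, Icc_eq_empty_of_lt j.lt_succ_self, sum_empty]; omega

theorem sum_epsM_sub_eps0_eq_sum_deltaM {m : ℕ} {x : ℕ → ℤ} (hx : ∀ i, 0 ≤ x i) {j : ℕ}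
    (hj : 1 ≤ j) :
    ∑ i ∈ Icc 1 j, epsM m x i j - eps0 m x 0 j = ∑ i ∈ Icc 1 j, deltaM m x i j := by
  set F : ℕ → ℤ := fun i => -eps0 m x (i - 1) j
  rw [sub_eq_iff_eq_add', ← sub_eq_iff_eq_add, ← sum_sub_distrib]
  calc ∑ i ∈ Icc 1 j, (epsM m x i j - deltaM m x i j)
      = ∑ i ∈ Icc 1 j, (F (i + 1) - F i) := sum_congr rfl fun i hi => by
        obtain ⟨hi1, hij⟩ := mem_Icc.1 hi
        simp only [F, epsM_sub_deltaM (hx (i - 1)) hi1 hij, Nat.add_sub_cancel]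
        ring
    _ = F (j + 1) - F 1 := sum_Icc_sub hj F
    _ = eps0 m x 0 j := by simp [F, eps0, hx j]

theorem statement2_general (ℓ m : ℕ) (x : ℕ → ℤ)
    (hx : IsDyck ℓ m x) (j : ℕ) (hj1 : 1 ≤ j) (hj2 : j ≤ ℓ - 1) :
    (∑ i ∈ Finset.Icc 1 j, epsP m x i j = ∑ i ∈ Finset.Icc 1 j, deltaP m x i j) ∧
    ((∑ i ∈ Finset.Icc 1 j, epsM m x i j) - eps0 m x 0 j =
      ∑ i ∈ Finset.Icc 1 j, deltaM m x i j) :=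
  ⟨sum_epsP_eq_sum_deltaP hx.1 hj1 (hx.sum_Icc_sub_le (by omega)),
    sum_epsM_sub_eps0_eq_sum_deltaM hx.1 hj1⟩

/-- Claim `epsi`: for an `(ℓ,m)`-Dyck path `x` and `1 ≤ j ≤ ℓ−1`,
`Σ_{i=1}^{j} ε⁺_{ij} = Σ_{i=1}^{j} δ⁺_{ij}` and
`Σ_{i=1}^{j} ε⁻_{ij} − ε⁰_{0j} = Σ_{i=1}^{j} δ⁻_{ij}`. -/
theorem statement2 (ℓ m : ℕ) (hm : 1 ≤ m) (hl : 2 ≤ ℓ) (x : ℕ → ℤ)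
    (hx : IsDyck ℓ m x) (j : ℕ) (hj1 : 1 ≤ j) (hj2 : j ≤ ℓ - 1) :
    (∑ i ∈ Finset.Icc 1 j, epsP m x i j = ∑ i ∈ Finset.Icc 1 j, deltaP m x i j) ∧
    ((∑ i ∈ Finset.Icc 1 j, epsM m x i j) - eps0 m x 0 j =
      ∑ i ∈ Finset.Icc 1 j, deltaM m x i j) :=
  statement2_general ℓ m x hx j hj1 hj2
end

section
/- Let m ≥ 1, ℓ ≥ 2, and let x = (x_0,…,x_ℓ) be a sequence of nonnegative integers. If x_1+x_2+⋯+x_{ℓ−1} ≤ (ℓ−2)m and x_0+x_1 ≥ m, then degr⁻(x) ≥ (ℓ−2)m. -/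
/-!
Read `degr⁻` column by column. With `S j = (m − x_1) + ⋯ + (m − x_j)` (`deficitSum`) one has
`δ⁻_{i+1,j} = g_i(S j)` for `g_i(s) = min(x_i, max(0, s − S i))` (`deltaLevel`), nondecreasing
in `s`.
The bound comes from the amortised invariant
`J·m ≤ (columns 1, …, J) + g_0(m) + ⋯ + g_J(m)`: the step from `J` to `J + 1` costs `m`,
paid by column `J + 1` together with the new term `g_{J+1}(m)`; the base case is
`x_0 + x_1 ≥ m`.
Finally `x_1 + ⋯ + x_{ℓ−1} ≤ (ℓ−2)m` says `S (ℓ−1) ≥ m`, so the last column dominates the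
leftover `g_0(m) + ⋯ + g_{ℓ−2}(m)`.
-/

open Finset

namespace DegrM

variable (m : ℕ) (x : ℕ → ℤ)

def deficitSum (j : ℕ) : ℤ := ∑ k ∈ Icc 1 j, ((m : ℤ) - x k)

def deltaLevel (i : ℕ) (s : ℤ) : ℤ := min (x i) (max 0 (s - deficitSum m x i))

def column (j : ℕ) : ℤ := ∑ i ∈ range j, deltaLevel m x i (deficitSum m x j)

lemma deficitSum_eq (j : ℕ) : deficitSum m x j = j * m - ∑ k ∈ Icc 1 j, x k := by
  simp [deficitSum, sum_sub_distrib]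

lemma deficitSum_succ (j : ℕ) :
    deficitSum m x (j + 1) = deficitSum m x j + ((m : ℤ) - x (j + 1)) :=
  sum_Icc_succ_top (by omega) _

lemma sum_Icc_succ_eq_deficitSum_sub {i j : ℕ} (hij : i ≤ j) :
    ∑ k ∈ Icc (i + 1) j, ((m : ℤ) - x k) = deficitSum m x j - deficitSum m x i := by
  have hIcc (n : ℕ) : Icc 1 n = Ioc 0 n := Icc_add_one_left_eq_Ioc 0 n
  rw [eq_sub_iff_add_eq', deficitSum, deficitSum, Icc_add_one_left_eq_Ioc, hIcc, hIcc,
    sum_Ioc_consecutive _ (Nat.zero_le i) hij]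

lemma deltaM_succ_eq_deltaLevel {i j : ℕ} (hij : i ≤ j) :
    deltaM m x (i + 1) j = deltaLevel m x i (deficitSum m x j) := by
  rw [deltaM, deltaLevel, Nat.add_sub_cancel, sum_Icc_succ_eq_deficitSum_sub m x hij]

lemma sum_deltaM_eq_column (j : ℕ) : ∑ i ∈ Icc 1 j, deltaM m x i j = column m x j := by
  rw [← Ico_add_one_right_eq_Icc, sum_Ico_eq_sum_range, column, add_tsub_cancel_right]
  exact sum_congr rfl fun i hi =>
    by rw [add_comm 1 i, deltaM_succ_eq_deltaLevel m x (mem_range.mp hi).le]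

lemma degrM_eq_sum_column (ℓ : ℕ) : degrM ℓ m x = ∑ j ∈ Icc 1 (ℓ - 1), column m x j := by
  have hcomm := sum_Ico_Ico_comm 1 (ℓ - 1 + 1) (fun i j => deltaM m x i j)
  simp only [Ico_add_one_right_eq_Icc] at hcomm
  rw [degrM, hcomm]
  exact sum_congr rfl fun j _ => sum_deltaM_eq_column m x j

lemma min_le_deltaLevel (i : ℕ) (s : ℤ) :
    min (x i) (s - deficitSum m x i) ≤ deltaLevel m x i s :=
  min_le_min le_rfl (le_max_right _ _)

lemma deltaLevel_mono (i : ℕ) {s s' : ℤ} (h : s ≤ s') :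
    deltaLevel m x i s ≤ deltaLevel m x i s' :=
  min_le_min le_rfl (max_le_max le_rfl (by omega))

variable {x}

lemma deltaLevel_nonneg (hpos : ∀ i, 0 ≤ x i) (i : ℕ) (s : ℤ) : 0 ≤ deltaLevel m x i s :=
  le_min (hpos i) (le_max_left _ _)

lemma column_nonneg (hpos : ∀ i, 0 ≤ x i) (j : ℕ) : 0 ≤ column m x j :=
  sum_nonneg fun i _ => deltaLevel_nonneg m hpos i _

lemma le_deltaLevel_zero_add_one (hpos : ∀ i, 0 ≤ x i) (h2 : (m : ℤ) ≤ x 0 + x 1) {s : ℤ}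
    (hs : s ≤ m) :
    s ≤ deltaLevel m x 0 s + deltaLevel m x 1 s := by
  have h0 := hpos 0
  have h1 := hpos 1
  simp only [deltaLevel, deficitSum, Icc_self, sum_singleton,
    Icc_eq_empty_of_lt zero_lt_one, sum_empty, min_def, max_def]
  split_ifs <;> omega

lemma le_sum_deltaLevel (hpos : ∀ i, 0 ≤ x i) (h2 : (m : ℤ) ≤ x 0 + x 1) {k : ℕ} (hk : 1 ≤ k)
    {s : ℤ} (hs : s ≤ m) :
    s ≤ ∑ i ∈ range (k + 1), deltaLevel m x i s :=
  calc s ≤ ∑ i ∈ range 2, deltaLevel m x i s := by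
        simpa [sum_range_succ] using le_deltaLevel_zero_add_one m hpos h2 hs
    _ ≤ ∑ i ∈ range (k + 1), deltaLevel m x i s :=
        sum_le_sum_of_subset_of_nonneg (range_subset_range.mpr (by omega))
          fun i _ _ => deltaLevel_nonneg m hpos i s

lemma sub_deficitSum_le_sum_deltaLevel (hpos : ∀ i, 0 ≤ x i) {k : ℕ} (hk : 1 ≤ k) {s : ℤ}
    (hs : s ≤ m) :
    s - deficitSum m x k ≤ ∑ i ∈ range (k + 1), deltaLevel m x i s := by
  induction k, hk using Nat.le_induction with
  | base =>
    have hlast := min_le_deltaLevel m x 1 s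
    have h1 : s - deficitSum m x 1 ≤ x 1 := by simp [deficitSum]; omega
    rw [sum_range_succ, sum_range_one]
    linarith [deltaLevel_nonneg m hpos 0 s, min_eq_right h1]
  | succ k hk ih =>
    rw [sum_range_succ]
    have hlast := min_le_deltaLevel m x (k + 1) s
    rcases min_cases (x (k + 1)) (s - deficitSum m x (k + 1)) with ⟨hmin, -⟩ | ⟨hmin, -⟩
    · linarith [deficitSum_succ m x k, Int.natCast_nonneg m]
    · linarith [sum_nonneg fun i (_ : i ∈ range (k + 1)) => deltaLevel_nonneg m hpos i s]

lemma le_column_succ_add_deltaLevel (hpos : ∀ i, 0 ≤ x i) (h2 : (m : ℤ) ≤ x 0 + x 1) {k : ℕ}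
    (hk : 1 ≤ k) :
    m ≤ column m x (k + 1) + deltaLevel m x (k + 1) m := by
  have hnew := deltaLevel_nonneg m hpos (k + 1) m
  rcases le_or_gt (m : ℤ) (deficitSum m x (k + 1)) with hS | hS
  · calc (m : ℤ) ≤ ∑ i ∈ range (k + 1), deltaLevel m x i m :=
          le_sum_deltaLevel m hpos h2 hk le_rfl
      _ ≤ column m x (k + 1) := sum_le_sum fun i _ => deltaLevel_mono m x i hS
      _ ≤ _ := le_add_of_nonneg_right hnew
  · rw [column]
    have hlast := min_le_deltaLevel m x (k + 1) m
    rcases min_cases (x (k + 1)) (m - deficitSum m x (k + 1)) with ⟨hmin, -⟩ | ⟨hmin, -⟩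
    -- capped by `x (k + 1)`: the levels below already cover `S (k + 1) - S k = m - x (k + 1)`
    · linarith [sub_deficitSum_le_sum_deltaLevel m hpos hk hS.le, deficitSum_succ m x k]
    · linarith [le_sum_deltaLevel m hpos h2 hk hS.le]

lemma mul_le_sum_column_add (hpos : ∀ i, 0 ≤ x i) (h2 : (m : ℤ) ≤ x 0 + x 1) {k : ℕ}
    (hk : 1 ≤ k) :
    k * m ≤ ∑ j ∈ Icc 1 k, column m x j + ∑ i ∈ range (k + 1), deltaLevel m x i m := by
  induction k, hk using Nat.le_induction with
  | base =>
    have := le_deltaLevel_zero_add_one m hpos h2 (le_refl (m : ℤ))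
    simp only [Icc_self, sum_singleton, sum_range_succ, sum_range_zero, Nat.cast_one, one_mul]
    linarith [column_nonneg m hpos 1]
  | succ k hk ih =>
    rw [sum_Icc_succ_top (by omega), sum_range_succ (n := k + 1)]
    push_cast
    linarith [le_column_succ_add_deltaLevel m hpos h2 hk]

lemma mul_le_sum_column (hpos : ∀ i, 0 ≤ x i) (h2 : (m : ℤ) ≤ x 0 + x 1) {k : ℕ} (hk : 1 ≤ k)
    (hS : m ≤ deficitSum m x (k + 1)) : k * m ≤ ∑ j ∈ Icc 1 (k + 1), column m x j := by
  have hlast : ∑ i ∈ range (k + 1), deltaLevel m x i m ≤ column m x (k + 1) :=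
    sum_le_sum fun i _ => deltaLevel_mono m x i hS
  rw [sum_Icc_succ_top (by omega)]
  linarith [mul_le_sum_column_add m hpos h2 hk]

end DegrM

theorem statement3_general (ℓ m : ℕ) (hl : 2 ≤ ℓ) (x : ℕ → ℤ)
    (hpos : ∀ i, 0 ≤ x i)
    (h1 : ∑ k ∈ Finset.Icc 1 (ℓ - 1), x k ≤ ((ℓ : ℤ) - 2) * m)
    (h2 : (m : ℤ) ≤ x 0 + x 1) :
    ((ℓ : ℤ) - 2) * m ≤ degrM ℓ m x := by
  obtain ⟨k, rfl⟩ : ∃ k, ℓ = k + 2 := ⟨ℓ - 2, by omega⟩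
  have hcast : ((k + 2 : ℕ) : ℤ) - 2 = k := by push_cast; ring
  rw [show k + 2 - 1 = k + 1 from rfl, hcast] at h1
  rw [DegrM.degrM_eq_sum_column, show k + 2 - 1 = k + 1 from rfl, hcast]
  rcases Nat.eq_zero_or_pos k with rfl | hk
  · simpa using DegrM.column_nonneg m hpos 1
  · have hS : (m : ℤ) ≤ DegrM.deficitSum m x (k + 1) := by
      rw [DegrM.deficitSum_eq]; push_cast; linarith
    exact DegrM.mul_le_sum_column m hpos h2 hk hS

/-- Claim `bound1`: if `x_1+⋯+x_{ℓ−1} ≤ (ℓ−2)m` and `x_0+x_1 ≥ m` then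
`degr⁻(x) ≥ (ℓ−2)m`. -/
theorem statement3 (ℓ m : ℕ) (hm : 1 ≤ m) (hl : 2 ≤ ℓ) (x : ℕ → ℤ)
    (hpos : ∀ i, 0 ≤ x i)
    (h1 : ∑ k ∈ Finset.Icc 1 (ℓ - 1), x k ≤ ((ℓ : ℤ) - 2) * m)
    (h2 : (m : ℤ) ≤ x 0 + x 1) :
    ((ℓ : ℤ) - 2) * m ≤ degrM ℓ m x :=
  statement3_general ℓ m hl x hpos h1 h2
end

section
/- Let m ≥ 1, ℓ ≥ 2, and let x = (x_0,…,x_ℓ) be a sequence of nonnegative integers. Suppose there exists an index i with 0 < i ≤ ℓ−1 that is minimal such that i > 0 and x_i + x_{i+1} ≥ m. Suppose moreover that x_{i+1}+x_{i+2}+⋯+x_{ℓ−1} > (ℓ−i)m+1, and that either there exists some 2 ≤ j ≤ ℓ−1 with x_0+x_1+⋯+x_j > jm, or else x_0+x_1 ≥ m. Then degr(x) ≥ (ℓ−2)m. -/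
open Finset

/-!
Write `e = ℓ - 1`. The surplus `x_{i+1} + ⋯ + x_e - (e - i)m ≥ m + 2` forces `degr⁺` on the
triangle `i ≤ a ≤ b ≤ e` to be at least `(e - i)m + (x_i - m) + ⋯ + (x_p - m) - 1` for every
`p ∈ [i, e]`. This is an induction on `e`: if `x_e ≤ m`, the last column of the triangle pays
for itself; otherwise merging `x_{e-1}, x_e` into `x_{e-1} + x_e - m` keeps every excess that
matters and costs at least `m` of `degr⁺`.

The missing `(i - 1)m` comes from `degr⁻` on the rows `a ≤ i`, where `x_a + x_{a+1} < m` makes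
the terms `δ⁻_{ab}` large. If `x_0 + x_1 ≥ m`, take `p = e`: the first two rows give `m` per
column. Otherwise take `p = j`: the diagonal gives `x_0 + ⋯ + x_{i-1}`, which together with
`x_0 + ⋯ + x_j > jm` is exactly what is missing.
-/

namespace DegrBound

def excess (m : ℕ) (x : ℕ → ℤ) (a b : ℕ) : ℤ := ∑ k ∈ Icc a b, (x k - m)

def degrPCol (m : ℕ) (x : ℕ → ℤ) (s b : ℕ) : ℤ := ∑ a ∈ Icc s b, deltaP m x a b

def degrPOn (m : ℕ) (x : ℕ → ℤ) (s e : ℕ) : ℤ := ∑ b ∈ Icc s e, degrPCol m x s b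

def mergeAt (m : ℕ) (x : ℕ → ℤ) (E : ℕ) : ℕ → ℤ := x + Pi.single E (x (E + 1) - m)

variable {m : ℕ} {x : ℕ → ℤ} {a b c e p s E ℓ i : ℕ}

lemma excess_self (a : ℕ) : excess m x a a = x a - m := by simp [excess]

lemma excess_of_lt (h : b < a) : excess m x a b = 0 := by simp [excess, Icc_eq_empty_of_lt h]

lemma excess_succ_right (h : a ≤ b + 1) :
    excess m x a (b + 1) = excess m x a b + (x (b + 1) - m) :=
  sum_Icc_succ_top h _

lemma excess_eq_sub_add_excess (h : a ≤ b) :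
    excess m x a b = x a - m + excess m x (a + 1) b := by
  rw [excess, excess, ← add_sum_Ioc_eq_sum_Icc h, Icc_add_one_left_eq_Ioc]

lemma excess_eq_sum_sub (a b : ℕ) :
    excess m x a b = ∑ k ∈ Icc a b, x k - ((b + 1 - a : ℕ) : ℤ) * m := by
  rw [excess, sum_sub_distrib, sum_const, Nat.card_Icc, nsmul_eq_mul]

lemma deltaP_eq_min : deltaP m x a b = min (x a) (max 0 (excess m x a b - 1)) := rfl

lemma deltaP_nonneg (h : 0 ≤ x a) : 0 ≤ deltaP m x a b := le_min h (le_max_left _ _)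

lemma max_excess_le_degrPCol (hx : ∀ k ∈ Icc c b, 0 ≤ x k) :
    max 0 (excess m x c b - 1) ≤ degrPCol m x c b := by
  induction hn : b + 1 - c generalizing c with
  | zero =>
    have hbc : b < c := by omega
    simp [excess_of_lt hbc, degrPCol, Icc_eq_empty_of_lt hbc]
  | succ n ih =>
    have hcb : c ≤ b := by omega
    have hrest := ih (fun k hk => hx k (Icc_subset_Icc_left (Nat.le_add_right c 1) hk))
      (by omega)
    have hxc := hx c (left_mem_Icc.2 hcb)
    rw [degrPCol, ← add_sum_Ioc_eq_sum_Icc hcb, ← Icc_add_one_left_eq_Ioc, deltaP_eq_min,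
      excess_eq_sub_add_excess hcb]
    rw [degrPCol] at hrest
    omega

lemma degrPCol_anti_left (h : s ≤ c) (hx : ∀ k ∈ Icc s b, 0 ≤ x k) :
    degrPCol m x c b ≤ degrPCol m x s b :=
  sum_le_sum_of_subset_of_nonneg (Icc_subset_Icc_left h) fun a ha _ => deltaP_nonneg (hx a ha)

lemma degrPOn_succ_right (h : s ≤ e + 1) :
    degrPOn m x s (e + 1) = degrPOn m x s e + degrPCol m x s (e + 1) :=
  sum_Icc_succ_top h _

lemma degrPOn_eq_sum_rows :
    degrPOn m x s e = ∑ a ∈ Icc s e, ∑ b ∈ Icc a e, deltaP m x a b :=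
  sum_comm' fun b a => by simp only [mem_Icc]; omega

lemma degrPOn_anti_left (h : s ≤ c) (hx : ∀ k ∈ Icc s e, 0 ≤ x k) :
    degrPOn m x c e ≤ degrPOn m x s e := by
  rw [degrPOn_eq_sum_rows, degrPOn_eq_sum_rows]
  exact sum_le_sum_of_subset_of_nonneg (Icc_subset_Icc_left h) fun a ha _ =>
    sum_nonneg fun b _ => deltaP_nonneg (hx a ha)

lemma degrP_eq_degrPOn (ℓ : ℕ) : degrP ℓ m x = degrPOn m x 1 (ℓ - 1) := by
  rw [degrPOn_eq_sum_rows]; rfl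

lemma mergeAt_of_ne {k : ℕ} (h : k ≠ E) : mergeAt m x E k = x k := by simp [mergeAt, h]

lemma mergeAt_self : mergeAt m x E E = x E + x (E + 1) - m := by
  simp [mergeAt]; ring

lemma excess_mergeAt :
    excess m (mergeAt m x E) a b = excess m x a b + if E ∈ Icc a b then x (E + 1) - m else 0 := by
  simp only [excess, mergeAt, Pi.add_apply, add_sub_right_comm, sum_add_distrib, sum_pi_single']

lemma excess_le_excess_mergeAt (hm : m ≤ x (E + 1)) (haE : a ≤ E) (hp : p ≤ E + 1) :
    excess m x a p ≤ excess m (mergeAt m x E) a (min p E) := by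
  rcases Nat.lt_or_ge E p with hEp | hpE
  · obtain rfl : p = E + 1 := by omega
    rw [min_eq_right (by omega), excess_mergeAt, if_pos (by simp; omega),
      excess_succ_right (by omega)]
  · rw [min_eq_left hpE, excess_mergeAt]
    split_ifs <;> omega

lemma mergeAt_nonneg (hx : ∀ k ∈ Icc s (E + 1), 0 ≤ x k) (hm : m ≤ x (E + 1)) :
    ∀ k ∈ Icc s E, 0 ≤ mergeAt m x E k := by
  intro k hk
  simp only [mem_Icc] at hk
  rcases eq_or_ne k E with rfl | hkE
  · have := hx k (by simp; omega)
    rw [mergeAt_self]; omega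
  · rw [mergeAt_of_ne hkE]; exact hx k (by simp; omega)

lemma degrPOn_mergeAt_add_le (hsE : s ≤ E) (hx : ∀ k ∈ Icc s (E + 1), 0 ≤ x k)
    (hxE : m + 1 ≤ x (E + 1)) (hcol : 2 * m + 1 ≤ degrPCol m x s E + x (E + 1)) :
    degrPOn m (mergeAt m x E) s E + m ≤ degrPOn m x s (E + 1) := by
  have hlow : ∀ b ∈ Ico s E, degrPCol m (mergeAt m x E) s b = degrPCol m x s b := by
    intro b hb
    refine sum_congr rfl fun a ha => ?_
    simp only [mem_Ico, mem_Icc] at ha hb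
    rw [deltaP_eq_min, deltaP_eq_min, mergeAt_of_ne (by omega), excess_mergeAt,
      if_neg (by simp; omega), add_zero]
  have hshift : ∀ a ∈ Ico s E, deltaP m (mergeAt m x E) a E = deltaP m x a (E + 1) := by
    intro a ha
    simp only [mem_Ico] at ha
    rw [deltaP_eq_min, deltaP_eq_min, mergeAt_of_ne (by omega), excess_mergeAt,
      if_pos (by simp; omega), excess_succ_right (by omega)]
  have hcolz : degrPCol m (mergeAt m x E) s E
      = ∑ a ∈ Ico s E, deltaP m x a (E + 1) + deltaP m (mergeAt m x E) E E := by
    rw [degrPCol, ← sum_Ico_add_eq_sum_Icc hsE, sum_congr rfl hshift]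
  have hcolx : degrPCol m x s (E + 1) = ∑ a ∈ Ico s E, deltaP m x a (E + 1)
      + deltaP m x E (E + 1) + deltaP m x (E + 1) (E + 1) := by
    rw [degrPCol, sum_Icc_succ_top (by omega), ← sum_Ico_add_eq_sum_Icc hsE]
  rw [degrPOn, degrPOn, sum_Icc_succ_top (by omega), ← sum_Ico_add_eq_sum_Icc hsE,
    ← sum_Ico_add_eq_sum_Icc hsE, sum_congr rfl hlow, hcolz, hcolx]
  -- η-expand the sum so that `omega` sees the same atom on both sides
  change ∑ b ∈ Ico s E, degrPCol m x s b + _ + _ ≤ _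
  rw [deltaP_eq_min, deltaP_eq_min, deltaP_eq_min, excess_self, excess_self,
    excess_succ_right (by omega), excess_self, mergeAt_self]
  have hxE0 := hx E (by simp; omega)
  have hcol0 : 0 ≤ degrPCol m x s E :=
    sum_nonneg fun a ha => deltaP_nonneg (hx a (by simp at ha ⊢; omega))
  omega

theorem excess_add_le_degrPOn (hsp : s ≤ p) (hpe : p ≤ e) (hx : ∀ k ∈ Icc s e, 0 ≤ x k)
    (htail : m + 2 ≤ excess m x (s + 1) e) :
    ((e : ℤ) - s) * m + excess m x s p - 1 ≤ degrPOn m x s e := by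
  have hse : s + 1 ≤ e := by
    by_contra h
    rw [excess_of_lt (by omega)] at htail
    omega
  induction e, hse using Nat.le_induction generalizing x p with
  | base =>
    rw [excess_self] at htail
    have hcol := max_excess_le_degrPCol (m := m) (c := s) (b := s)
      (fun k hk => hx k (by simp at hk ⊢; omega))
    have hcol_z := max_excess_le_degrPCol (m := m) (c := s) (b := s)
      (mergeAt_nonneg (m := m) hx (by omega))
    have hpz := excess_le_excess_mergeAt (m := m) (x := x) (by omega) le_rfl hpe
    have hmerge := degrPOn_mergeAt_add_le (m := m) le_rfl hx (by omega) (by omega)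
    rw [min_eq_right hsp] at hpz
    rw [degrPOn, Icc_self, sum_singleton] at hmerge
    push_cast
    omega
  | succ e hse ih =>
    have hstep : ((e + 1 : ℕ) - (s : ℤ)) * m = ((e : ℤ) - s) * m + m := by push_cast; ring
    rw [hstep]
    rcases le_or_gt (x (e + 1)) m with hsmall | hlarge
    · have hcol := max_excess_le_degrPCol (m := m) (c := s + 1) (b := e + 1)
        (fun k hk => hx k (by simp at hk ⊢; omega))
      have hcol_anti := degrPCol_anti_left (m := m) (Nat.le_add_right s 1) hx
      rw [excess_succ_right (by omega)] at htail hcol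
      have ih' := ih (p := min p e) (by omega) (by omega)
        (fun k hk => hx k (by simp at hk ⊢; omega)) (by omega)
      rw [degrPOn_succ_right (by omega)]
      rcases Nat.lt_or_ge e p with hep | hpe'
      · obtain rfl : p = e + 1 := by omega
        rw [min_eq_right (by omega)] at ih'
        rw [excess_succ_right (by omega)]
        omega
      · rw [min_eq_left hpe'] at ih'
        omega
    · have hcol := max_excess_le_degrPCol (m := m) (c := s + 1) (b := e)
        (fun k hk => hx k (by simp at hk ⊢; omega))
      have hcol_anti := degrPCol_anti_left (m := m) (b := e) (Nat.le_add_right s 1)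
        (fun k hk => hx k (by simp at hk ⊢; omega))
      rw [excess_succ_right (by omega)] at htail
      have htail_z : m + 2 ≤ excess m (mergeAt m x e) (s + 1) e := by
        rw [excess_mergeAt, if_pos (by simp; omega)]
        omega
      have ih' := ih (p := min p e) (by omega) (by omega) (mergeAt_nonneg hx hlarge.le) htail_z
      have hpz := excess_le_excess_mergeAt hlarge.le (by omega : s ≤ e) hpe
      have hmerge := degrPOn_mergeAt_add_le (m := m) (by omega) hx (by omega) (by omega)
      omega

lemma deltaM_nonneg (h : 0 ≤ x (a - 1)) : 0 ≤ deltaM m x a b := le_min h (le_max_left _ _)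

lemma min_le_deltaM (hab : a ≤ b) (hx : ∀ k ∈ Ioc a b, x k ≤ m) :
    min (x (a - 1)) (m - x a) ≤ deltaM m x a b := by
  refine min_le_min le_rfl (le_max_of_le_right ?_)
  rw [← add_sum_Ioc_eq_sum_Icc hab]
  have := sum_nonneg fun k hk => sub_nonneg.2 (hx k hk)
  linarith

lemma sum_sum_deltaM_le_degrM (S : Finset ℕ) (T : ℕ → Finset ℕ) (hS : S ⊆ Icc 1 (ℓ - 1))
    (hT : ∀ a ∈ S, T a ⊆ Icc a (ℓ - 1)) (hx : ∀ k, 0 ≤ x k) :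
    ∑ a ∈ S, ∑ b ∈ T a, deltaM m x a b ≤ degrM ℓ m x :=
  (sum_le_sum fun a ha => sum_le_sum_of_subset_of_nonneg (hT a ha) fun _ _ _ =>
    deltaM_nonneg (hx _)).trans
  (sum_le_sum_of_subset_of_nonneg hS fun _ _ _ => sum_nonneg fun _ _ => deltaM_nonneg (hx _))

lemma le_of_forall_add_lt (hx : ∀ k, 0 ≤ x k)
    (hmin : ∀ k, 0 < k → k < i → x k + x (k + 1) < m) : ∀ k ∈ Icc 2 i, x k ≤ m := by
  intro k hk
  simp only [mem_Icc] at hk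
  have h := hmin (k - 1) (by omega) (by omega)
  rw [Nat.sub_add_cancel (by omega)] at h
  linarith [hx (k - 1)]

/-- The first two rows of `degr⁻` carry `m` per column `b ∈ [2, i]`. -/
lemma mul_le_degrM (hx : ∀ k, 0 ≤ x k) (hi0 : 0 < i) (hie : i + 1 ≤ ℓ - 1)
    (h01 : m ≤ x 0 + x 1) (hmin : ∀ k, 0 < k → k < i → x k + x (k + 1) < m) :
    ((i : ℤ) - 1) * m ≤ degrM ℓ m x := by
  have hsmall := le_of_forall_add_lt hx hmin
  have hcol : ∀ b ∈ Icc 2 i, (m : ℤ) ≤ deltaM m x 1 b + deltaM m x 2 b := by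
    intro b hb
    simp only [mem_Icc] at hb
    have h1 := min_le_deltaM (m := m) (x := x) (a := 1) (b := b) (by omega)
      fun k hk => hsmall k (by simp at hk ⊢; omega)
    have h2 := min_le_deltaM (m := m) (x := x) (a := 2) (b := b) (by omega)
      fun k hk => hsmall k (by simp at hk ⊢; omega)
    have h12 : x 1 + x 2 < m := hmin 1 one_pos (by omega)
    norm_num at h1 h2
    omega
  have hrows := sum_sum_deltaM_le_degrM (ℓ := ℓ) (m := m) {1, 2} (fun a => Icc a i)
    (by intro a ha; simp at ha ⊢; omega) (fun a _ => Icc_subset_Icc_right (by omega)) hx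
  rw [sum_pair (by norm_num), ← add_sum_Ioc_eq_sum_Icc (by omega : 1 ≤ i),
    ← Icc_add_one_left_eq_Ioc] at hrows
  change deltaM m x 1 1 + ∑ b ∈ Icc 2 i, _ + _ ≤ _ at hrows
  have hcols := sum_le_sum hcol
  rw [sum_const, Nat.card_Icc, nsmul_eq_mul, sum_add_distrib] at hcols
  have h11 : 0 ≤ deltaM m x 1 1 := deltaM_nonneg (hx 0)
  have hcast : ((i + 1 - 2 : ℕ) : ℤ) = i - 1 := by omega
  rw [hcast] at hcols
  linarith

/-- The diagonal terms `δ⁻_{aa}` alone suffice. -/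
lemma sum_range_le_degrM (hx : ∀ k, 0 ≤ x k) (hil : i ≤ ℓ - 1) (h01 : x 0 + x 1 < m)
    (hmin : ∀ k, 0 < k → k < i → x k + x (k + 1) < m) :
    ∑ k ∈ range i, x k ≤ degrM ℓ m x := by
  have hdiag : ∀ k ∈ range i, x k ≤ deltaM m x (1 + k) (1 + k) := by
    intro k hk
    have h := min_le_deltaM (m := m) (x := x) (a := 1 + k) le_rfl (by simp)
    have hpair : x k + x (k + 1) < m := by
      rcases Nat.eq_zero_or_pos k with rfl | hk0
      · exact h01
      · exact hmin k hk0 (mem_range.1 hk)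
    rw [show 1 + k - 1 = k by omega, add_comm 1 k] at h
    rw [add_comm 1 k]
    omega
  calc ∑ k ∈ range i, x k ≤ ∑ k ∈ range i, deltaM m x (1 + k) (1 + k) := sum_le_sum hdiag
    _ = ∑ a ∈ Icc 1 i, ∑ b ∈ {a}, deltaM m x a b := by
      rw [← Ico_add_one_right_eq_Icc, sum_Ico_eq_sum_range, Nat.add_sub_cancel]
      simp
    _ ≤ degrM ℓ m x :=
      sum_sum_deltaM_le_degrM _ _ (Icc_subset_Icc_right hil)
        (fun a ha => by simp at ha ⊢; omega) hx

lemma sum_range_succ_lt_mul {j : ℕ} (hj : 1 ≤ j) (h01 : x 0 + x 1 < m)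
    (hx : ∀ k ∈ Icc 2 j, x k ≤ m) : ∑ k ∈ range (j + 1), x k < j * m := by
  induction j, hj using Nat.le_induction with
  | base => simpa [sum_range_succ] using h01
  | succ j hj ih =>
    rw [sum_range_succ]
    have h1 := ih fun k hk => hx k (by simp at hk ⊢; omega)
    have h2 := hx (j + 1) (by simp; omega)
    push_cast
    linarith

lemma add_one_le_of_lt_sum_Icc (hil : i ≤ ℓ - 1)
    (hbig : ((ℓ : ℤ) - i) * m + 1 < ∑ k ∈ Icc (i + 1) (ℓ - 1), x k) :
    i + 1 ≤ ℓ - 1 := by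
  by_contra h
  rw [Icc_eq_empty (by omega), sum_empty] at hbig
  have : (0 : ℤ) ≤ ((ℓ : ℤ) - i) * m := mul_nonneg (by omega) (by positivity)
  omega

lemma le_excess_of_lt_sum_Icc (hil : i ≤ ℓ - 1)
    (hbig : ((ℓ : ℤ) - i) * m + 1 < ∑ k ∈ Icc (i + 1) (ℓ - 1), x k) :
    m + 2 ≤ excess m x (i + 1) (ℓ - 1) := by
  have hie := add_one_le_of_lt_sum_Icc hil hbig
  rw [excess_eq_sum_sub, show ℓ - 1 + 1 - (i + 1) = ℓ - 1 - i by omega, Nat.cast_sub hil,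
    Nat.cast_sub (by omega : 1 ≤ ℓ)]
  push_cast
  linarith

theorem excess_add_le_degrP (hx : ∀ k, 0 ≤ x k) (hi0 : 0 < i) (hip : i ≤ p)
    (hpl : p ≤ ℓ - 1) (htail : m + 2 ≤ excess m x (i + 1) (ℓ - 1)) :
    ((ℓ : ℤ) - 1 - i) * m + excess m x i p - 1 ≤ degrP ℓ m x := by
  have hℓ : ((ℓ - 1 : ℕ) : ℤ) = ℓ - 1 := by omega
  have h := excess_add_le_degrPOn hip hpl (fun k _ => hx k) htail
  rw [hℓ] at h
  exact h.trans (degrP_eq_degrPOn ℓ ▸ degrPOn_anti_left hi0 fun k _ => hx k)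

end DegrBound

open DegrBound

theorem statement4_general (ℓ m : ℕ) (x : ℕ → ℤ)
    (hpos : ∀ i, 0 ≤ x i)
    (i : ℕ) (hi0 : 0 < i) (hil : i ≤ ℓ - 1)
    (hmin : ∀ i', 0 < i' → i' < i → x i' + x (i' + 1) < (m : ℤ))
    (hbig : ((ℓ : ℤ) - i) * m + 1 < ∑ k ∈ Finset.Icc (i + 1) (ℓ - 1), x k)
    (hor : (∃ j, 2 ≤ j ∧ j ≤ ℓ - 1 ∧ (j : ℤ) * m < ∑ k ∈ Finset.range (j + 1), x k) ∨
      (m : ℤ) ≤ x 0 + x 1) :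
    ((ℓ : ℤ) - 2) * m ≤ degr ℓ m x := by
  have hie := add_one_le_of_lt_sum_Icc hil hbig
  have htail := le_excess_of_lt_sum_Icc hil hbig
  rw [degr]
  rcases le_or_gt (m : ℤ) (x 0 + x 1) with h01 | h01
  · have hM := mul_le_degrM hpos hi0 hie h01 hmin
    have hPe := excess_add_le_degrP hpos hi0 hil le_rfl htail
    rw [excess_eq_sub_add_excess (by omega)] at hPe
    linarith [hpos i]
  · rcases hor with ⟨j, hj2, hjl, hjs⟩ | h01'
    swap
    · exact absurd h01' (not_le.2 h01)
    have hij : i ≤ j := by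
      by_contra h
      have := sum_range_succ_lt_mul (j := j) (by omega) h01 fun k hk =>
        le_of_forall_add_lt hpos hmin k (by simp at hk ⊢; omega)
      linarith
    have hM := sum_range_le_degrM hpos hil h01 hmin
    have hPj := excess_add_le_degrP hpos hi0 hij hjl htail
    rw [excess_eq_sum_sub] at hPj
    rw [← sum_range_add_sum_Ico _ (by omega : i ≤ j + 1), Ico_add_one_right_eq_Icc] at hjs
    have hcast : ((j + 1 - i : ℕ) : ℤ) = j + 1 - i := by omega
    rw [hcast] at hPj
    linarith

/-- Claim `bound2`. -/
theorem statement4 (ℓ m : ℕ) (hm : 1 ≤ m) (hl : 2 ≤ ℓ) (x : ℕ → ℤ)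
    (hpos : ∀ i, 0 ≤ x i)
    (i : ℕ) (hi0 : 0 < i) (hil : i ≤ ℓ - 1)
    (hi : (m : ℤ) ≤ x i + x (i + 1))
    (hmin : ∀ i', 0 < i' → i' < i → x i' + x (i' + 1) < (m : ℤ))
    (hbig : ((ℓ : ℤ) - i) * m + 1 < ∑ k ∈ Finset.Icc (i + 1) (ℓ - 1), x k)
    (hor : (∃ j, 2 ≤ j ∧ j ≤ ℓ - 1 ∧ (j : ℤ) * m < ∑ k ∈ Finset.range (j + 1), x k) ∨
      (m : ℤ) ≤ x 0 + x 1) :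
    ((ℓ : ℤ) - 2) * m ≤ degr ℓ m x :=
  statement4_general ℓ m x hpos i hi0 hil hmin hbig hor
end

section
/- Let m ≥ 1, ℓ ≥ 1, suppose y ∈ D_{ℓ,m} is rightable at r, and let x = right(y). Then: (1) x ∈ D_{ℓ,m} and x ∉ T_{ℓ,m}; (2) x is leftable at r and left(x) = y; (3) degr(x) = degr(y); (4) area(x) = area(y) + 1. -/
open Finset

/-!
In position coordinates, `right` takes the last height `a_ℓ`, raises it by one and reinserts it
right after position `r`; `left` undoes exactly this, and the area grows by one. Since `r` is the
point of `y`, every height before position `r` lies at least `m` below `a_ℓ`: this keeps the new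
path Dyck and locates its `pair` at `r`.

For the degree, `degr` is a sum over pairs `i < t` of a term depending on `a_{i-1}, a_i, a_{i+1}`
and `a_t`. Rows `i < r` see `a_ℓ + 1` in place of `a_ℓ`, which contributes the same because both
lie at least `m` above `a_{i-1}`; rows beyond `r + 1` are the old rows shifted by one place, minus
their pair with `a_ℓ`. What remains (the new row `r + 1`, the changes in rows `r` and `r + 2`,
and the lost pairs with `a_ℓ`) is a sum over heights `a_k`, `r < k < ℓ`, of local terms that
telescope along the potential `degrPot`, which takes the value `a_ℓ` at both ends.
-/

section IocSums

variable {M : Type*}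

lemma sum_Ioc_add_one_add_one [AddCommMonoid M] (f : ℕ → M) (a b : ℕ) :
    ∑ t ∈ Ioc (a + 1) (b + 1), f t = ∑ s ∈ Ioc a b, f (s + 1) := by
  rw [← map_add_right_Ioc, sum_map]
  rfl

lemma sum_Ioc_eq_add_sum_Ioc [AddCommMonoid M] (f : ℕ → M) {a b : ℕ} (h : a < b) :
    ∑ t ∈ Ioc a b, f t = f (a + 1) + ∑ t ∈ Ioc (a + 1) b, f t := by
  rw [← insert_Ioc_add_one_left_eq_Ioc h, sum_insert left_notMem_Ioc]

lemma sum_Ioc_sub_pred [AddCommGroup M] (f : ℕ → M) {a b : ℕ} (h : a ≤ b) :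
    ∑ k ∈ Ioc a b, (f k - f (k - 1)) = f b - f a := by
  induction b, h using Nat.le_induction with
  | base => simp
  | succ b hab ih =>
    rw [sum_Ioc_succ_top hab, ih, Nat.add_sub_cancel]
    abel

end IocSums

section Positions

variable {ℓ m : ℕ} {x : ℕ → ℤ}

lemma pSum_succ (x : ℕ → ℤ) (i : ℕ) : pSum x (i + 1) = pSum x i + x i :=
  sum_range_succ x i

@[simp] lemma dyckPos_zero : dyckPos ℓ m x 0 = 0 := by
  simp [dyckPos, pSum]

lemma dyckPos_of_lt {i : ℕ} (hi : ℓ < i) : dyckPos ℓ m x i = 0 :=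
  if_neg (by omega)

lemma eq_add_dyckPos_sub_dyckPos {i : ℕ} (hi : i < ℓ) :
    x i = m + dyckPos ℓ m x i - dyckPos ℓ m x (i + 1) := by
  rw [dyckPos, dyckPos, if_pos hi.le, if_pos (by omega), pSum_succ]
  push_cast
  ring

lemma sum_Icc_sub_eq_dyckPos_sub {i j : ℕ} (hij : i ≤ j + 1) (hj : j < ℓ) :
    ∑ k ∈ Icc i j, (x k - m) = dyckPos ℓ m x i - dyckPos ℓ m x (j + 1) := by
  have hstep : ∀ k ∈ Ico i (j + 1),
      x k - m = -(dyckPos ℓ m x (k + 1) - dyckPos ℓ m x k) := fun k hk => by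
    have hk : k < ℓ := by have := (mem_Ico.1 hk).2; omega
    rw [eq_add_dyckPos_sub_dyckPos (m := m) (x := x) hk]
    ring
  rw [← Ico_add_one_right_eq_Icc, sum_congr rfl hstep, sum_neg_distrib, sum_Ico_sub _ hij]
  ring

structure IsDyckPos (ℓ m : ℕ) (a : ℕ → ℤ) : Prop where
  zero : a 0 = 0
  nonneg : ∀ i, 0 ≤ a i
  succ_le : ∀ i, a (i + 1) ≤ a i + m
  eq_zero : ∀ i, ℓ < i → a i = 0

lemma IsDyck.isDyckPos (hx : IsDyck ℓ m x) : IsDyckPos ℓ m (dyckPos ℓ m x) := by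
  obtain ⟨hnn, hpre, -, -⟩ := hx
  have hnonneg : ∀ i, 0 ≤ dyckPos ℓ m x i := by
    rintro (_ | i)
    · simp
    · rcases lt_or_ge i ℓ with hi | hi
      · have := hpre i hi
        rw [dyckPos, if_pos (by omega)]
        push_cast at this ⊢
        linarith
      · rw [dyckPos_of_lt (by omega)]
  refine ⟨dyckPos_zero, hnonneg, fun i => ?_, fun i hi => dyckPos_of_lt hi⟩
  rcases lt_or_ge i ℓ with hi | hi
  · linarith [eq_add_dyckPos_sub_dyckPos (m := m) (x := x) hi, hnn i]
  · rw [dyckPos_of_lt (by omega)]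
    linarith [hnonneg i]

lemma pSum_fromPos (a : ℕ → ℤ) {i : ℕ} (hi : i ≤ ℓ + 1) :
    pSum (fromPos ℓ m a) i = m * i + a 0 - a i := by
  induction i with
  | zero => simp [pSum]
  | succ i ih =>
    rw [pSum_succ, ih (by omega), fromPos, if_pos (by omega)]
    push_cast
    ring

lemma dyckPos_fromPos {a : ℕ → ℤ} (ha0 : a 0 = 0) (ha : ∀ i, ℓ < i → a i = 0) :
    dyckPos ℓ m (fromPos ℓ m a) = a := by
  funext i
  rcases le_or_gt i ℓ with hi | hi
  · rw [dyckPos, if_pos hi, pSum_fromPos a (by omega), ha0]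
    ring
  · rw [dyckPos_of_lt hi, ha i hi]

lemma IsDyckPos.isDyck {a : ℕ → ℤ} (ha : IsDyckPos ℓ m a) : IsDyck ℓ m (fromPos ℓ m a) := by
  refine ⟨fun i => ?_, fun i hi => ?_, ?_, fun i hi => if_neg (by omega)⟩
  · unfold fromPos
    split_ifs
    · linarith [ha.succ_le i]
    · rfl
  · rw [pSum_fromPos a (by omega), ha.zero]
    push_cast
    linarith [ha.nonneg (i + 1)]
  · rw [pSum_fromPos a le_rfl, ha.zero, ha.eq_zero (ℓ + 1) (by omega)]
    push_cast
    ring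

lemma IsDyck.fromPos_dyckPos (hx : IsDyck ℓ m x) : fromPos ℓ m (dyckPos ℓ m x) = x := by
  funext i
  rcases lt_trichotomy i ℓ with hi | rfl | hi
  · rw [fromPos, if_pos hi.le, ← eq_add_dyckPos_sub_dyckPos hi]
  · have htot := hx.2.2.1
    rw [pSum_succ] at htot
    rw [fromPos, if_pos le_rfl, dyckPos_of_lt (Nat.lt_succ_self _), dyckPos, if_pos le_rfl]
    linarith
  · rw [fromPos, if_neg (by omega), hx.2.2.2 i hi]

end Positions

section RightPos

variable {ℓ m r : ℕ} {a : ℕ → ℤ}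

/-- `r < ℓ` is `point(a)`: the least index with `a_r - a_ℓ > -m`. -/
structure IsRightPoint (ℓ m : ℕ) (a : ℕ → ℤ) (r : ℕ) : Prop where
  lt : r < ℓ
  last_lt : a ℓ < a r + m
  add_le_last : ∀ j < r, a j + m ≤ a ℓ

lemma RightableAt.isRightPoint {x : ℕ → ℤ} (hm : 1 ≤ m) (hr : RightableAt ℓ m x r) :
    IsRightPoint ℓ m (dyckPos ℓ m x) r := by
  obtain ⟨hpoint, hrℓ, -⟩ := hr
  -- `1 ≤ m` puts `ℓ` in the set, so that its `sInf` is attained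
  have hℓ : ℓ ∈ {r' : ℕ | -(m : ℤ) < dyckPos ℓ m x r' - dyckPos ℓ m x ℓ} := by
    simp only [Set.mem_ofPred_eq, sub_self]
    omega
  have hmem := Nat.sInf_mem ⟨ℓ, hℓ⟩
  rw [← dyckPoint, hpoint, Set.mem_ofPred_eq] at hmem
  refine ⟨hrℓ, by linarith, fun j hj => ?_⟩
  have := Nat.notMem_of_lt_sInf (hpoint ▸ hj : j < dyckPoint ℓ m x)
  simp only [Set.mem_ofPred_eq, not_lt] at this
  linarith

lemma IsRightPoint.le_last (ha : IsDyckPos ℓ m a) (hp : IsRightPoint ℓ m a r) : a r ≤ a ℓ := by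
  rcases r with _ | j
  · simpa [ha.zero] using ha.nonneg ℓ
  · linarith [ha.succ_le j, hp.add_le_last j (Nat.lt_succ_self j)]

def rightPos (a : ℕ → ℤ) (ℓ r : ℕ) : ℕ → ℤ := fun i =>
  if i ≤ r then a i else if i = r + 1 then a ℓ + 1 else if i ≤ ℓ then a (i - 1) else 0

lemma rightPosSeq_eq_rightPos (x : ℕ → ℤ) :
    rightPosSeq ℓ m x r = rightPos (dyckPos ℓ m x) ℓ r :=
  rfl

lemma rightPos_of_le {i : ℕ} (hi : i ≤ r) : rightPos a ℓ r i = a i := if_pos hi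

lemma rightPos_succ : rightPos a ℓ r (r + 1) = a ℓ + 1 := by
  simp [rightPos]

lemma rightPos_succ_of_lt {i : ℕ} (hri : r < i) (hiℓ : i < ℓ) :
    rightPos a ℓ r (i + 1) = a i := by
  simp only [rightPos, if_neg (show ¬i + 1 ≤ r by omega), if_neg (show i + 1 ≠ r + 1 by omega),
    if_pos (show i + 1 ≤ ℓ by omega), Nat.add_sub_cancel]

lemma rightPos_of_lt {i : ℕ} (hr : r < ℓ) (hi : ℓ < i) : rightPos a ℓ r i = 0 := by
  simp only [rightPos, if_neg (show ¬i ≤ r by omega), if_neg (show i ≠ r + 1 by omega),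
    if_neg (show ¬i ≤ ℓ by omega)]

lemma isDyckPos_rightPos (ha : IsDyckPos ℓ m a) (hp : IsRightPoint ℓ m a r) :
    IsDyckPos ℓ m (rightPos a ℓ r) := by
  have hnonneg : ∀ i, 0 ≤ rightPos a ℓ r i := fun i => by
    unfold rightPos
    split_ifs <;> linarith [ha.nonneg i, ha.nonneg ℓ, ha.nonneg (i - 1)]
  refine ⟨by rw [rightPos_of_le (Nat.zero_le r), ha.zero], hnonneg, fun i => ?_,
    fun i hi => rightPos_of_lt hp.lt hi⟩
  obtain hir | rfl | hri := lt_trichotomy i r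
  · rw [rightPos_of_le hir, rightPos_of_le hir.le]
    exact ha.succ_le i
  · rw [rightPos_succ, rightPos_of_le le_rfl]
    linarith [hp.last_lt]
  · rcases lt_or_ge i ℓ with hiℓ | hiℓ
    · rw [rightPos_succ_of_lt hri hiℓ]
      obtain rfl | hri' := (Nat.succ_le_of_lt hri).eq_or_lt
      · rw [rightPos_succ]
        linarith [ha.succ_le r, hp.le_last ha]
      · obtain ⟨j, rfl⟩ : ∃ j, i = j + 1 := ⟨i - 1, by omega⟩
        rw [rightPos_succ_of_lt (by omega) (by omega)]
        exact ha.succ_le j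
    · rw [rightPos_of_lt hp.lt (by omega)]
      linarith [hnonneg i]

lemma sum_Ioc_rightPos (f : ℤ → ℤ) {i : ℕ} (hi : i ≤ r) (hr : r < ℓ) :
    ∑ t ∈ Ioc i ℓ, f (rightPos a ℓ r t) + f (a ℓ) = ∑ t ∈ Ioc i ℓ, f (a t) + f (a ℓ + 1) := by
  obtain ⟨n, rfl⟩ : ∃ n, ℓ = n + 1 := ⟨ℓ - 1, by omega⟩
  have hlow : ∑ t ∈ Ioc i r, f (rightPos a (n + 1) r t) = ∑ t ∈ Ioc i r, f (a t) :=
    sum_congr rfl fun t ht => by rw [rightPos_of_le (mem_Ioc.1 ht).2]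
  have hhigh : ∑ s ∈ Ioc r n, f (rightPos a (n + 1) r (s + 1)) = ∑ s ∈ Ioc r n, f (a s) :=
    sum_congr rfl fun s hs => by
      rw [rightPos_succ_of_lt (mem_Ioc.1 hs).1 (by have := (mem_Ioc.1 hs).2; omega)]
  rw [← sum_Ioc_consecutive _ hi hr.le, sum_Ioc_eq_add_sum_Ioc _ hr, sum_Ioc_add_one_add_one,
    rightPos_succ, hlow, hhigh, ← sum_Ioc_consecutive _ hi hr.le, sum_Ioc_succ_top (by omega)]
  ring

end RightPos

/- In position coordinates `δ⁺_{ij} = degrUp m a_i a_{i+1} a_t` and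
`δ⁻_{ij} = degrDown m a_{i-1} a_i a_t` with `t = j + 1`; `posDegr` also sums the empty
row `i = ℓ`. -/

def degrUp (m : ℕ) (v w s : ℤ) : ℤ := min (m + v - w) (max 0 (v - s - 1))

def degrDown (m : ℕ) (u v s : ℤ) : ℤ := min (m + u - v) (max 0 (s - v))

def rowDegr (m : ℕ) (a : ℕ → ℤ) (ℓ i : ℕ) : ℤ :=
  ∑ t ∈ Ioc i ℓ, (degrUp m (a i) (a (i + 1)) (a t) + degrDown m (a (i - 1)) (a i) (a t))

def posDegr (m : ℕ) (a : ℕ → ℤ) (ℓ : ℕ) : ℤ := ∑ i ∈ Ioc 0 ℓ, rowDegr m a ℓ i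

lemma degr_eq_posDegr (ℓ m : ℕ) (x : ℕ → ℤ) : degr ℓ m x = posDegr m (dyckPos ℓ m x) ℓ := by
  rcases ℓ with _ | n
  · simp [degr, degrP, degrM, posDegr]
  rw [degr, degrP, degrM, ← sum_add_distrib, posDegr, sum_Ioc_succ_top (Nat.zero_le _),
    rowDegr, Ioc_self, sum_empty, add_zero, Nat.add_sub_cancel, ← Icc_add_one_left_eq_Ioc,
    zero_add]
  refine sum_congr rfl fun i hi => ?_
  obtain ⟨hi1, hin⟩ := mem_Icc.1 hi
  rw [← sum_add_distrib, rowDegr, ← Icc_add_one_left_eq_Ioc, ← map_add_right_Icc, sum_map]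
  refine sum_congr rfl fun j hj => ?_
  obtain ⟨hij, hjn⟩ := mem_Icc.1 hj
  have hsum := sum_Icc_sub_eq_dyckPos_sub (x := x) (m := m) (by omega : i ≤ j + 1)
    (by omega : j < n + 1)
  have hsum' : ∑ k ∈ Icc i j, ((m : ℤ) - x k) = -∑ k ∈ Icc i j, (x k - m) := by
    rw [← sum_neg_distrib]
    simp
  have hxi' := eq_add_dyckPos_sub_dyckPos (x := x) (m := m) (by omega : i - 1 < n + 1)
  rw [Nat.sub_add_cancel hi1] at hxi'
  have hxi := eq_add_dyckPos_sub_dyckPos (x := x) (m := m) (by omega : i < n + 1)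
  rw [deltaP, deltaM, hsum', hsum, hxi, hxi', neg_sub]
  rfl

section DegrTerms

variable {m : ℕ} {s p q u v v' w : ℤ}

lemma degrUp_eq_zero (hw : w ≤ v + m) (hvs : v ≤ s) : degrUp m v w s = 0 := by
  unfold degrUp
  omega

lemma degrDown_self (h : v ≤ u + m) : degrDown m u v v = 0 := by
  unfold degrDown
  omega

lemma degrUp_add_degrDown_of_le (hw : w ≤ v + m) (hv : v ≤ u + m) (hs : u + m ≤ s) :
    degrUp m v w s + degrDown m u v s = m + u - v := by
  unfold degrUp degrDown
  omega

lemma degrUp_add_degrDown_eq (hv : v ≤ u + m) :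
    degrUp m u v s + degrDown m u v s =
      max 0 (u - s - 1) + min (m + u) s - (min v s + max 0 (v - m - s - 1)) := by
  unfold degrUp degrDown
  omega

lemma degr_change_eq (hps : p ≤ s) (hsp : s < p + m) (hqp : q ≤ p + m) :
    degrUp m (s + 1) q v + degrDown m p (s + 1) v + (degrUp m p (s + 1) v - degrUp m p q v)
      + (degrDown m (s + 1) q v - degrDown m p q v)
      = max 0 (v - s - 1) + min (m + v) s - (min v s + max 0 (v - m - s - 1)) := by
  unfold degrUp degrDown
  omega

def degrPot (m : ℕ) (s v w : ℤ) : ℤ := max 0 (v - s - 1) + min (m + v) s - degrUp m v w s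

lemma degrPot_eq (hw : w ≤ v + m) (hws : w ≤ s + m + 1) (hs : s ≤ v + m) :
    degrPot m s v w = s := by
  unfold degrPot degrUp
  omega

lemma degr_change_sub_eq_degrPot_sub (hps : p ≤ s) (hsp : s < p + m) (hqp : q ≤ p + m)
    (hvv' : v ≤ v' + m) :
    degrUp m (s + 1) q v + degrDown m p (s + 1) v + (degrUp m p (s + 1) v - degrUp m p q v)
      + (degrDown m (s + 1) q v - degrDown m p q v) - (degrUp m v w s + degrDown m v' v s)
      = degrPot m s v w - degrPot m s v' v := by
  have := degr_change_eq (v := v) hps hsp hqp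
  have := degrUp_add_degrDown_eq (s := s) hvv'
  unfold degrPot
  linarith

end DegrTerms

section RowDegr

variable {n m r : ℕ} {a : ℕ → ℤ}

lemma rowDegr_rightPos_of_lt (ha : IsDyckPos (n + 1) m a) (hp : IsRightPoint (n + 1) m a r)
    {i : ℕ} (hi : 1 ≤ i) (hir : i < r) :
    rowDegr m (rightPos a (n + 1) r) (n + 1) i = rowDegr m a (n + 1) i := by
  have hF : ∀ s, a (n + 1) ≤ s →
      degrUp m (a i) (a (i + 1)) s + degrDown m (a (i - 1)) (a i) s = m + a (i - 1) - a i := by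
    intro s hs
    have := hp.add_le_last (i - 1) (by omega)
    have := ha.succ_le (i - 1)
    rw [Nat.sub_add_cancel hi] at this
    exact degrUp_add_degrDown_of_le (ha.succ_le i) (by omega) (by linarith)
  have := sum_Ioc_rightPos (a := a)
    (fun s => degrUp m (a i) (a (i + 1)) s + degrDown m (a (i - 1)) (a i) s) hir.le hp.lt
  simp only [hF _ le_rfl, hF _ (le_add_of_nonneg_right zero_le_one)] at this
  rw [rowDegr, rightPos_of_le hir.le, rightPos_of_le (show i + 1 ≤ r by omega),
    rightPos_of_le (show i - 1 ≤ r by omega), rowDegr]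
  linarith

lemma rowDegr_rightPos_self (ha : IsDyckPos (n + 1) m a) (hp : IsRightPoint (n + 1) m a r)
    (hr : 1 ≤ r) :
    rowDegr m (rightPos a (n + 1) r) (n + 1) r = rowDegr m a (n + 1) r + ∑ k ∈ Ioc r n,
      (degrUp m (a r) (a (n + 1) + 1) (a k) - degrUp m (a r) (a (r + 1)) (a k)) := by
  have hrn : r ≤ n := Nat.lt_succ_iff.1 hp.lt
  have hlast := hp.last_lt
  have hprev := ha.succ_le (r - 1)
  rw [Nat.sub_add_cancel hr] at hprev
  have hbefore := hp.add_le_last (r - 1) (by omega)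
  have hshift : ∑ s ∈ Ioc r n, (degrUp m (a r) (a (n + 1) + 1) (rightPos a (n + 1) r (s + 1))
        + degrDown m (a (r - 1)) (a r) (rightPos a (n + 1) r (s + 1)))
      = ∑ s ∈ Ioc r n, (degrUp m (a r) (a (r + 1)) (a s) + degrDown m (a (r - 1)) (a r) (a s))
        + ∑ k ∈ Ioc r n,
          (degrUp m (a r) (a (n + 1) + 1) (a k) - degrUp m (a r) (a (r + 1)) (a k)) := by
    rw [← sum_add_distrib]
    refine sum_congr rfl fun s hs => ?_
    rw [rightPos_succ_of_lt (mem_Ioc.1 hs).1 (Nat.lt_succ_of_le (mem_Ioc.1 hs).2)]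
    ring
  have hnew := degrUp_add_degrDown_of_le (m := m) (s := a (n + 1) + 1) (w := a (n + 1) + 1)
    (by omega) hprev (by omega)
  have hold := degrUp_add_degrDown_of_le (m := m) (s := a (n + 1)) (ha.succ_le r) hprev hbefore
  rw [rowDegr, rightPos_of_le le_rfl, rightPos_succ, rightPos_of_le (Nat.sub_le r 1),
    sum_Ioc_eq_add_sum_Ioc _ hp.lt, rightPos_succ, sum_Ioc_add_one_add_one, hshift, rowDegr,
    sum_Ioc_succ_top (by omega)]
  linarith

lemma sum_rowDegr_rightPos_le (ha : IsDyckPos (n + 1) m a) (hp : IsRightPoint (n + 1) m a r) :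
    ∑ i ∈ Ioc 0 r, rowDegr m (rightPos a (n + 1) r) (n + 1) i
      = ∑ i ∈ Ioc 0 r, rowDegr m a (n + 1) i + ∑ k ∈ Ioc r n,
        (degrUp m (a r) (a (n + 1) + 1) (a k) - degrUp m (a r) (a (r + 1)) (a k)) := by
  rcases r with _ | j
  · have hlast := hp.last_lt
    have h1 := ha.succ_le 0
    rw [ha.zero] at hlast h1 ⊢
    simp only [Ioc_self, sum_empty, zero_add]
    refine (sum_eq_zero fun k hk => ?_).symm
    rw [degrUp_eq_zero (by omega) (ha.nonneg k), degrUp_eq_zero (by omega) (ha.nonneg k),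
      sub_self]
  · rw [sum_Ioc_succ_top (Nat.zero_le j), sum_Ioc_succ_top (Nat.zero_le j),
      rowDegr_rightPos_self ha hp (Nat.succ_pos j),
      sum_congr rfl fun i hi => rowDegr_rightPos_of_lt ha hp (mem_Ioc.1 hi).1
        (Nat.lt_succ_of_le (mem_Ioc.1 hi).2)]
    ring

lemma rowDegr_rightPos_succ (hr : r < n + 1) :
    rowDegr m (rightPos a (n + 1) r) (n + 1) (r + 1) = ∑ k ∈ Ioc r n,
      (degrUp m (a (n + 1) + 1) (a (r + 1)) (a k) + degrDown m (a r) (a (n + 1) + 1) (a k)) := by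
  rw [rowDegr, sum_Ioc_add_one_add_one, Nat.add_sub_cancel]
  refine sum_congr rfl fun s hs => ?_
  obtain ⟨hrs, hsn⟩ := mem_Ioc.1 hs
  rw [rightPos_succ, rightPos_succ_of_lt (Nat.lt_succ_self r) (by omega), rightPos_of_le le_rfl,
    rightPos_succ_of_lt hrs (by omega)]

lemma rowDegr_rightPos_succ_of_lt {k : ℕ} (hrk : r < k) (hkn : k ≤ n) :
    rowDegr m (rightPos a (n + 1) r) (n + 1) (k + 1)
        + (degrUp m (a k) (a (k + 1)) (a (n + 1)) + degrDown m (a (k - 1)) (a k) (a (n + 1)))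
      = rowDegr m a (n + 1) k + ∑ s ∈ Ioc k n,
        (degrDown m (rightPos a (n + 1) r k) (a k) (a s) - degrDown m (a (k - 1)) (a k) (a s)) := by
  have hshift : rowDegr m (rightPos a (n + 1) r) (n + 1) (k + 1) = ∑ s ∈ Ioc k n,
      (degrUp m (a k) (a (k + 1)) (a s) + degrDown m (rightPos a (n + 1) r k) (a k) (a s)) := by
    rw [rowDegr, sum_Ioc_add_one_add_one, Nat.add_sub_cancel]
    refine sum_congr rfl fun s hs => ?_
    obtain ⟨hks, hsn⟩ := mem_Ioc.1 hs
    rw [rightPos_succ_of_lt hrk (by omega), rightPos_succ_of_lt (by omega : r < k + 1) (by omega),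
      rightPos_succ_of_lt (by omega : r < s) (by omega)]
  have hsplit : ∑ s ∈ Ioc k n,
      (degrUp m (a k) (a (k + 1)) (a s) + degrDown m (rightPos a (n + 1) r k) (a k) (a s))
      = ∑ s ∈ Ioc k n, (degrUp m (a k) (a (k + 1)) (a s) + degrDown m (a (k - 1)) (a k) (a s))
        + ∑ s ∈ Ioc k n,
        (degrDown m (rightPos a (n + 1) r k) (a k) (a s) - degrDown m (a (k - 1)) (a k) (a s)) := by
    rw [← sum_add_distrib]
    exact sum_congr rfl fun s _ => by ring
  rw [hshift, hsplit, rowDegr, sum_Ioc_succ_top (by omega)]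
  ring

lemma sum_rowDegr_rightPos_gt (ha : IsDyckPos (n + 1) m a) (hp : IsRightPoint (n + 1) m a r) :
    ∑ i ∈ Ioc (r + 1) (n + 1), rowDegr m (rightPos a (n + 1) r) (n + 1) i + ∑ k ∈ Ioc r n,
        (degrUp m (a k) (a (k + 1)) (a (n + 1)) + degrDown m (a (k - 1)) (a k) (a (n + 1)))
      = ∑ k ∈ Ioc r n, rowDegr m a (n + 1) k + ∑ k ∈ Ioc r n,
          (degrDown m (a (n + 1) + 1) (a (r + 1)) (a k) - degrDown m (a r) (a (r + 1)) (a k)) := by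
  rw [sum_Ioc_add_one_add_one, ← sum_add_distrib,
    sum_congr rfl fun k hk => rowDegr_rightPos_succ_of_lt (mem_Ioc.1 hk).1 (mem_Ioc.1 hk).2,
    sum_add_distrib]
  congr 1
  -- only row `r + 2` changes its left neighbour, from `a r` to `a ℓ + 1`
  rcases (Nat.lt_succ_iff.1 hp.lt).lt_or_eq with hrn | rfl
  · rw [sum_eq_single_of_mem (r + 1) (mem_Ioc.2 ⟨r.lt_succ_self, hrn⟩), rightPos_succ,
      Nat.add_sub_cancel, sum_Ioc_eq_add_sum_Ioc _ hrn, degrDown_self, degrDown_self, sub_self,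
      zero_add]
    · linarith [ha.succ_le r]
    · linarith [ha.succ_le r, hp.le_last ha]
    intro k hk hkr
    obtain ⟨hrk, hkn⟩ := mem_Ioc.1 hk
    obtain ⟨j, rfl⟩ : ∃ j, k = j + 1 := ⟨k - 1, by omega⟩
    rw [rightPos_succ_of_lt (by omega) (by omega), Nat.add_sub_cancel]
    exact sum_eq_zero fun s _ => sub_self _
  · simp

lemma sum_degr_change_sub_eq_zero (ha : IsDyckPos (n + 1) m a) (hp : IsRightPoint (n + 1) m a r) :
    ∑ k ∈ Ioc r n,
      (degrUp m (a (n + 1) + 1) (a (r + 1)) (a k) + degrDown m (a r) (a (n + 1) + 1) (a k)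
        + (degrUp m (a r) (a (n + 1) + 1) (a k) - degrUp m (a r) (a (r + 1)) (a k))
        + (degrDown m (a (n + 1) + 1) (a (r + 1)) (a k) - degrDown m (a r) (a (r + 1)) (a k))
        - (degrUp m (a k) (a (k + 1)) (a (n + 1)) + degrDown m (a (k - 1)) (a k) (a (n + 1))))
      = 0 := by
  have hlast := hp.last_lt
  have hle := hp.le_last ha
  have hq := ha.succ_le r
  have hn := ha.succ_le n
  rw [sum_congr rfl fun k hk => ?_,
    sum_Ioc_sub_pred (fun j => degrPot m (a (n + 1)) (a j) (a (j + 1))) (Nat.lt_succ_iff.1 hp.lt),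
    degrPot_eq hn (by omega) hn, degrPot_eq hq (by omega) (by omega), sub_self]
  have hk1 : k - 1 + 1 = k := Nat.sub_add_cancel (by have := (mem_Ioc.1 hk).1; omega)
  have hk := ha.succ_le (k - 1)
  rw [hk1] at hk
  rw [degr_change_sub_eq_degrPot_sub hle (by omega) hq hk, hk1]

end RowDegr

theorem posDegr_rightPos {ℓ m r : ℕ} {a : ℕ → ℤ} (ha : IsDyckPos ℓ m a)
    (hp : IsRightPoint ℓ m a r) : posDegr m (rightPos a ℓ r) ℓ = posDegr m a ℓ := by
  obtain ⟨n, rfl⟩ : ∃ n, ℓ = n + 1 := ⟨ℓ - 1, by have := hp.lt; omega⟩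
  have hlow := sum_rowDegr_rightPos_le ha hp
  have hmid := rowDegr_rightPos_succ (m := m) (a := a) hp.lt
  have hhigh := sum_rowDegr_rightPos_gt ha hp
  have htel := sum_degr_change_sub_eq_zero ha hp
  simp only [sum_add_distrib, sum_sub_distrib] at htel hlow hmid hhigh
  have hempty : rowDegr m a (n + 1) (n + 1) = 0 := by simp [rowDegr]
  rw [posDegr, posDegr, ← sum_Ioc_consecutive _ (Nat.zero_le r) hp.lt.le,
    ← sum_Ioc_consecutive _ (Nat.zero_le r) hp.lt.le, sum_Ioc_eq_add_sum_Ioc _ hp.lt,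
    sum_Ioc_succ_top (Nat.lt_succ_iff.1 hp.lt), hempty]
  linarith

section RightMap

variable {ℓ m r : ℕ} {y : ℕ → ℤ}

lemma dyckPos_rightMap (hm : 1 ≤ m) (hy : IsDyck ℓ m y) (hr : RightableAt ℓ m y r) :
    dyckPos ℓ m (rightMap ℓ m y r) = rightPos (dyckPos ℓ m y) ℓ r :=
  have hb := isDyckPos_rightPos hy.isDyckPos (hr.isRightPoint hm)
  dyckPos_fromPos hb.zero hb.eq_zero

lemma isDyck_rightMap (hm : 1 ≤ m) (hy : IsDyck ℓ m y) (hr : RightableAt ℓ m y r) :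
    IsDyck ℓ m (rightMap ℓ m y r) :=
  (isDyckPos_rightPos hy.isDyckPos (hr.isRightPoint hm)).isDyck

lemma rightMap_zero_ne (hm : 1 ≤ m) (hy : IsDyck ℓ m y) (hr : RightableAt ℓ m y r) :
    rightMap ℓ m y r 0 ≠ m := by
  have ha := hy.isDyckPos
  have hp := hr.isRightPoint hm
  suffices 0 < rightPos (dyckPos ℓ m y) ℓ r 1 by
    rw [rightMap, fromPos, if_pos (Nat.zero_le ℓ), rightPosSeq_eq_rightPos,
      rightPos_of_le (Nat.zero_le r), ha.zero, zero_add]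
    omega
  rcases r with _ | _ | r
  · rw [rightPos_succ]
    linarith [ha.nonneg ℓ]
  · rw [rightPos_of_le le_rfl]
    linarith [hp.last_lt, hp.add_le_last 0 Nat.one_pos, ha.zero]
  · rw [rightPos_of_le (by omega)]
    linarith [hr.2.2 0 (by omega), ha.succ_le 1, ha.zero]

lemma leftableAt_rightMap (hm : 1 ≤ m) (hy : IsDyck ℓ m y) (hr : RightableAt ℓ m y r) :
    LeftableAt ℓ m (rightMap ℓ m y r) r := by
  have ha := hy.isDyckPos
  have hp := hr.isRightPoint hm
  have hlt := hp.lt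
  rw [LeftableAt, dyckPair, dyckPos_rightMap hm hy hr]
  refine ⟨IsLeast.csInf_eq ⟨⟨hlt, ?_⟩, fun j ⟨_, hj⟩ => not_lt.1 fun hjr => ?_⟩, ?_⟩
  · rw [rightPos_of_le le_rfl]
    rcases lt_or_ge (r + 1) ℓ with h | h
    · rw [rightPos_succ_of_lt (Nat.lt_succ_self r) h]
      linarith [ha.succ_le r]
    · rw [rightPos_of_lt hlt (by omega)]
      linarith [ha.nonneg r]
  · rw [rightPos_of_le hjr.le] at hj
    rcases lt_or_ge (j + 2) (r + 1) with h | h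
    · rw [rightPos_of_le (by omega)] at hj
      linarith [hr.2.2 j (by omega)]
    · rw [show j + 2 = r + 1 by omega, rightPos_succ] at hj
      linarith [hp.add_le_last j hjr]
  · rw [rightPos_succ]
    rcases lt_or_ge (r + 1) ℓ with h | h
    · obtain ⟨k, rfl⟩ : ∃ k, ℓ = k + 1 := ⟨ℓ - 1, by omega⟩
      rw [rightPos_succ_of_lt (by omega) (Nat.lt_succ_self k)]
      linarith [ha.succ_le k]
    · rw [show ℓ = r + 1 by omega, rightPos_succ]
      linarith

lemma leftMap_rightMap (hm : 1 ≤ m) (hy : IsDyck ℓ m y) (hr : RightableAt ℓ m y r) :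
    leftMap ℓ m (rightMap ℓ m y r) r = y := by
  have hlt := (hr.isRightPoint hm).lt
  suffices leftPosSeq ℓ m (rightMap ℓ m y r) r = dyckPos ℓ m y by
    rw [leftMap, this, hy.fromPos_dyckPos]
  funext i
  simp only [leftPosSeq, dyckPos_rightMap hm hy hr]
  split_ifs with h1 h2 h3
  · exact rightPos_of_le h1
  · exact rightPos_succ_of_lt (not_le.1 h1) h2
  · rw [rightPos_succ, h3, add_sub_cancel_right]
  · exact (dyckPos_of_lt (by omega)).symm

lemma degr_rightMap (hm : 1 ≤ m) (hy : IsDyck ℓ m y) (hr : RightableAt ℓ m y r) :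
    degr ℓ m (rightMap ℓ m y r) = degr ℓ m y := by
  rw [degr_eq_posDegr, degr_eq_posDegr, dyckPos_rightMap hm hy hr,
    posDegr_rightPos hy.isDyckPos (hr.isRightPoint hm)]

lemma area_rightMap (hm : 1 ≤ m) (hy : IsDyck ℓ m y) (hr : RightableAt ℓ m y r) :
    area ℓ m (rightMap ℓ m y r) = area ℓ m y + 1 := by
  have := sum_Ioc_rightPos (a := dyckPos ℓ m y) id (Nat.zero_le r) (hr.isRightPoint hm).lt
  simp only [id] at this
  rw [area, area, dyckPos_rightMap hm hy hr, ← zero_add 1, Icc_add_one_left_eq_Ioc]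
  linarith

end RightMap

theorem statement5_general (ℓ m : ℕ) (hm : 1 ≤ m) (y : ℕ → ℤ) (r : ℕ)
    (hy : IsDyck ℓ m y) (hr : RightableAt ℓ m y r) :
    IsDyck ℓ m (rightMap ℓ m y r) ∧ (rightMap ℓ m y r) 0 ≠ (m : ℤ) ∧
    LeftableAt ℓ m (rightMap ℓ m y r) r ∧ leftMap ℓ m (rightMap ℓ m y r) r = y ∧
    degr ℓ m (rightMap ℓ m y r) = degr ℓ m y ∧
    area ℓ m (rightMap ℓ m y r) = area ℓ m y + 1 :=
  ⟨isDyck_rightMap hm hy hr, rightMap_zero_ne hm hy hr, leftableAt_rightMap hm hy hr,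
    leftMap_rightMap hm hy hr, degr_rightMap hm hy hr, area_rightMap hm hy hr⟩

/-- Claim `rightcheck`: if `y ∈ 𝐃_{ℓ,m}` is rightable at `r` and
`x = right(y)`, then (1) `x ∈ 𝐃_{ℓ,m} \ 𝐓_{ℓ,m}`, (2) `x` is leftable at `r`
and `left(x) = y`, (3) `degr(x) = degr(y)`, (4) `area(x) = area(y) + 1`. -/
theorem statement5 (ℓ m : ℕ) (hm : 1 ≤ m) (hl : 1 ≤ ℓ) (y : ℕ → ℤ) (r : ℕ)
    (hy : IsDyck ℓ m y) (hr : RightableAt ℓ m y r) :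
    IsDyck ℓ m (rightMap ℓ m y r) ∧ (rightMap ℓ m y r) 0 ≠ (m : ℤ) ∧
    LeftableAt ℓ m (rightMap ℓ m y r) r ∧ leftMap ℓ m (rightMap ℓ m y r) r = y ∧
    degr ℓ m (rightMap ℓ m y r) = degr ℓ m y ∧
    area ℓ m (rightMap ℓ m y r) = area ℓ m y + 1 :=
  statement5_general ℓ m hm y r hy hr
end
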